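/- arXiv:1509.03788 — 6 statements merged into one kernel-verified Lean document; each statement's English description precedes it below -/
import Mathlib

section
/- For every α ≥ 1 there exist constants C₀ ≥ 1, C ≥ 1 and ε₀ ∈ (0,1), depending only on α, such that the following holds. Let ε ∈ (0, ε₀), let L, K ∈ ℕ with L ≥ 1 and K ≤ εL, let E₀ ∈ ℝ, and let (λ_k, a_k)_{0 ≤ k ≤ K} be near-boundary spectral data with constant α at E₀. Then for every integer n with 0 ≤ n < K, every real x ∈ [(λ_{n−1} + λ_n)/2, (λ_n + λ_{n+1})/2] (with the convention λ_{−1} := 2E₀ − λ₀), and every real y with C₀(n+1)/L² ≤ y ≤ ε⁵, one has Σ_{k=0}^{K} a_k·y/((λ_k − x)² + y²) ≤ C·ε. -/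
/-!
Split off the term `k = n`. Since `y ≥ α(n+1)/L²` it is at most `a_n / y ≤ (n+1)/L ≤ ε`.
For `k ≠ n`, the position of `x` between the midpoints gives
`|λ_k - x| ≥ |λ_k - λ_n| / 2 ≥ |k² - n²| / (2αL²)`, which is at least `|k - n| δ` with
`δ = (n+1)/(4αL²)` and at least `(k - n)²/(2αL²)`. Splitting the weight bound along
`(k+1)² ≤ 2(n+1)² + 2(k-n)²`, the first part meets the Lorentzian weights
`y / (((k-n)δ)² + y²)`, whose sum telescopes to `O(1/δ)`, for a total `O(α²(n+1)/L)`; on the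
second part `y / (D² + y²) ≤ 1/(2D)` gives `O(α²/L)` per term, for a total `O(α²K/L)`.
Both are `O(α²ε)` because `n < K ≤ εL`.
-/

open Finset

/-- Near-boundary spectral data with constant `α ≥ 1` at `E₀`:
`lam 0 < lam 1 < ⋯ < lam K`, with
(i) `(k+1)²/(αL²) ≤ lam k − E₀ ≤ α(k+1)²/L²`,
(ii) `|lam k − lam m| ≥ |k² − m²|/(αL²)` for `k ≠ m`,
and nonnegative weights satisfying (iii) `a k ≤ α(k+1)²/L³`. -/
def NearBoundaryData (α : ℝ) (L K : ℕ) (E₀ : ℝ) (lam a : ℕ → ℝ) : Prop :=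
  (∀ k m : ℕ, k < m → m ≤ K → lam k < lam m) ∧
  (∀ k ≤ K, ((k : ℝ) + 1) ^ 2 / (α * (L : ℝ) ^ 2) ≤ lam k - E₀ ∧
    lam k - E₀ ≤ α * ((k : ℝ) + 1) ^ 2 / (L : ℝ) ^ 2) ∧
  (∀ k ≤ K, ∀ m ≤ K, k ≠ m →
    |(k : ℝ) ^ 2 - (m : ℝ) ^ 2| / (α * (L : ℝ) ^ 2) ≤ |lam k - lam m|) ∧
  (∀ k ≤ K, 0 ≤ a k) ∧
  (∀ k ≤ K, a k ≤ α * ((k : ℝ) + 1) ^ 2 / (L : ℝ) ^ 3)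

lemma lorentzian_le_two_div_mul_sub {s δ y : ℝ} (hs : 0 ≤ s) (hδ : 0 < δ) (hy : 0 < y) :
    y / ((s + δ) ^ 2 + y ^ 2) ≤ 2 / δ * (y / (s + y) - y / (s + δ + y)) := by
  have h : 2 / δ * (y / (s + y) - y / (s + δ + y)) = 2 * y / ((s + y) * (s + δ + y)) := by
    field_simp
    ring
  rw [h, div_le_div_iff₀ (by positivity) (by positivity)]
  nlinarith [mul_nonneg hy.le (sq_nonneg (s + δ - y)),
    mul_nonneg hy.le (mul_nonneg hδ.le (by positivity : (0 : ℝ) ≤ s + δ + y))]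

lemma sum_range_lorentzian_le {δ y : ℝ} (hδ : 0 < δ) (hy : 0 < y) (M : ℕ) :
    ∑ j ∈ range M, y / ((((j : ℝ) + 1) * δ) ^ 2 + y ^ 2) ≤ 2 / δ := by
  set g : ℕ → ℝ := fun m ↦ y / (m * δ + y)
  calc ∑ j ∈ range M, y / ((((j : ℝ) + 1) * δ) ^ 2 + y ^ 2)
      ≤ ∑ j ∈ range M, 2 / δ * (g j - g (j + 1)) := by
        refine sum_le_sum fun j _ ↦ ?_
        simp only [g, Nat.cast_succ, add_mul, one_mul]
        exact lorentzian_le_two_div_mul_sub (by positivity) hδ hy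
    _ = 2 / δ * (1 - g M) := by
        rw [← mul_sum, sum_range_sub', show g 0 = 1 by simp [g, hy.ne']]
    _ ≤ 2 / δ := by
        have : 0 ≤ g M := by positivity
        exact mul_le_of_le_one_right (by positivity) (by linarith)

lemma sum_erase_lorentzian_le {δ y : ℝ} (hδ : 0 < δ) (hy : 0 < y) (N n : ℕ) :
    ∑ k ∈ (range N).erase n, y / ((((k : ℝ) - n) * δ) ^ 2 + y ^ 2) ≤ 4 / δ := by
  set f : ℕ → ℝ := fun k ↦ y / ((((k : ℝ) - n) * δ) ^ 2 + y ^ 2)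
  have hsub : (range N).erase n ⊆ range n ∪ Ico (n + 1) N := by
    intro k hk
    simp only [mem_erase, mem_range] at hk
    simp only [mem_union, mem_range, mem_Ico]
    omega
  have hdisj : Disjoint (range n) (Ico (n + 1) N) := by
    rw [range_eq_Ico]
    exact Ico_disjoint_Ico_consecutive 0 n N |>.mono_right (Ico_subset_Ico_left n.le_succ)
  have hbelow : ∑ k ∈ range n, f k ≤ 2 / δ := by
    rw [← sum_range_reflect]
    convert sum_range_lorentzian_le hδ hy n using 2 with j hj
    have : j < n := mem_range.mp hj
    simp only [f]
    rw [Nat.cast_sub (by omega), Nat.cast_sub (by omega)]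
    ring
  have habove : ∑ k ∈ Ico (n + 1) N, f k ≤ 2 / δ := by
    rw [sum_Ico_eq_sum_range]
    convert sum_range_lorentzian_le hδ hy (N - (n + 1)) using 2 with j
    simp only [f]
    push_cast
    ring
  calc ∑ k ∈ (range N).erase n, f k ≤ ∑ k ∈ range n ∪ Ico (n + 1) N, f k :=
        sum_le_sum_of_subset_of_nonneg hsub fun k _ _ ↦ by positivity
    _ = ∑ k ∈ range n, f k + ∑ k ∈ Ico (n + 1) N, f k := sum_union hdisj
    _ ≤ 2 / δ + 2 / δ := add_le_add hbelow habove
    _ = 4 / δ := by ring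

lemma sq_sub_le_abs_sq_sub_sq (k n : ℕ) :
    ((k : ℝ) - n) ^ 2 ≤ |(k : ℝ) ^ 2 - (n : ℝ) ^ 2| := by
  have h : |(k : ℝ) - n| ≤ k + n := abs_sub_le_iff.2 ⟨by linarith [n.cast_nonneg (α := ℝ)],
    by linarith [k.cast_nonneg (α := ℝ)]⟩
  rw [sq_sub_sq, abs_mul, abs_of_nonneg (by positivity), ← sq_abs, sq]
  exact mul_le_mul_of_nonneg_right h (abs_nonneg _)

lemma abs_sub_mul_succ_le_two_mul_abs_sq_sub_sq {k n : ℕ} (hkn : k ≠ n) :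
    |(k : ℝ) - n| * ((n : ℝ) + 1) ≤ 2 * |(k : ℝ) ^ 2 - (n : ℝ) ^ 2| := by
  have h : (1 : ℝ) ≤ k + n := by exact_mod_cast (show 1 ≤ k + n by omega)
  rw [sq_sub_sq, abs_mul, abs_of_nonneg (by positivity : (0 : ℝ) ≤ k + n)]
  nlinarith [abs_nonneg ((k : ℝ) - n), n.cast_nonneg (α := ℝ)]

lemma mul_div_sq_add_sq_le_div {b d D y : ℝ} (hb : 0 ≤ b) (hd : 0 < d) (hdD : d ≤ |D|)
    (hy : 0 < y) : b * y / (D ^ 2 + y ^ 2) ≤ b / (2 * d) := by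
  have h : 2 * d * y ≤ D ^ 2 + y ^ 2 := by
    nlinarith [two_mul_le_add_sq |D| y, sq_abs D]
  rw [div_le_div_iff₀ (by positivity) (by positivity)]
  nlinarith [mul_le_mul_of_nonneg_left h hb]

lemma mul_div_sq_add_sq_le_div_self {b D y : ℝ} (hb : 0 ≤ b) (hy : 0 < y) :
    b * y / (D ^ 2 + y ^ 2) ≤ b / y := by
  rw [div_le_div_iff₀ (by positivity) hy]
  nlinarith [mul_nonneg hb (sq_nonneg D)]

lemma weighted_lorentzian_le {α L a y D : ℝ} {k n : ℕ} (hα : 0 < α) (hL : 0 < L) (hy : 0 < y)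
    (hkn : k ≠ n) (ha : a ≤ α * ((k : ℝ) + 1) ^ 2 / L ^ 3)
    (hD : |(k : ℝ) ^ 2 - (n : ℝ) ^ 2| / (2 * α * L ^ 2) ≤ |D|) :
    a * y / (D ^ 2 + y ^ 2) ≤
      2 * α * ((n : ℝ) + 1) ^ 2 / L ^ 3 *
        (y / ((((k : ℝ) - n) * (((n : ℝ) + 1) / (4 * α * L ^ 2))) ^ 2 + y ^ 2)) +
      2 * α ^ 2 / L := by
  set A := 2 * α * ((n : ℝ) + 1) ^ 2 / L ^ 3
  set B := 2 * α * ((k : ℝ) - n) ^ 2 / L ^ 3 with hB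
  have hkn' : (k : ℝ) - n ≠ 0 := sub_ne_zero.2 (Nat.cast_injective.ne hkn)
  -- from `k + 1 = (n + 1) + (k - n)`
  have haAB : a ≤ A + B := by
    refine ha.trans ?_
    rw [← add_div, div_le_div_iff_of_pos_right (by positivity)]
    nlinarith [sq_nonneg ((n : ℝ) + 1 - ((k : ℝ) - n))]
  have hnear : (((k : ℝ) - n) * (((n : ℝ) + 1) / (4 * α * L ^ 2))) ^ 2 ≤ D ^ 2 := by
    refine sq_le_sq.2 (le_trans ?_ hD)
    rw [abs_mul, abs_of_pos (by positivity : 0 < ((n : ℝ) + 1) / (4 * α * L ^ 2)),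
      ← mul_div_assoc, div_le_div_iff₀ (by positivity) (by positivity)]
    nlinarith [mul_le_mul_of_nonneg_right (abs_sub_mul_succ_le_two_mul_abs_sq_sub_sq hkn)
      (by positivity : (0 : ℝ) ≤ 2 * α * L ^ 2)]
  have hfar : ((k : ℝ) - n) ^ 2 / (2 * α * L ^ 2) ≤ |D| :=
    le_trans (div_le_div_of_nonneg_right (sq_sub_le_abs_sq_sub_sq k n) (by positivity)) hD
  calc a * y / (D ^ 2 + y ^ 2) ≤ (A + B) * y / (D ^ 2 + y ^ 2) := by gcongr
    _ = A * (y / (D ^ 2 + y ^ 2)) + B * y / (D ^ 2 + y ^ 2) := by ring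
    _ ≤ A * (y / ((((k : ℝ) - n) * (((n : ℝ) + 1) / (4 * α * L ^ 2))) ^ 2 + y ^ 2)) +
          B / (2 * (((k : ℝ) - n) ^ 2 / (2 * α * L ^ 2))) :=
      add_le_add (by gcongr) (mul_div_sq_add_sq_le_div (by positivity) (by positivity) hfar hy)
    _ = _ := by
      rw [hB]
      field_simp

namespace NearBoundaryData

variable {α : ℝ} {L K : ℕ} {E₀ : ℝ} {lam a : ℕ → ℝ}

lemma lam_le_of_le (h : NearBoundaryData α L K E₀ lam a) {k m : ℕ} (hkm : k ≤ m)
    (hm : m ≤ K) : lam k ≤ lam m := by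
  rcases hkm.lt_or_eq with hlt | rfl
  · exact (h.1 k m hlt hm).le
  · rfl

lemma abs_sub_le_two_mul_abs_sub (h : NearBoundaryData α L K E₀ lam a) {n k : ℕ} {x : ℝ}
    (hnK : n < K) (hk : k ≤ K)
    (hx₁ : ((if n = 0 then 2 * E₀ - lam 0 else lam (n - 1)) + lam n) / 2 ≤ x)
    (hx₂ : x ≤ (lam n + lam (n + 1)) / 2) :
    |lam k - lam n| ≤ 2 * |lam k - x| := by
  rcases lt_trichotomy k n with hkn | rfl | hkn
  · rw [if_neg (by omega)] at hx₁
    have h₁ := h.lam_le_of_le (show k ≤ n - 1 by omega) (by omega)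
    have h₂ := h.lam_le_of_le (show n - 1 ≤ n by omega) hnK.le
    rw [abs_of_nonpos (by linarith)]
    linarith [neg_le_abs (lam k - x)]
  · simp
  · have h₁ := h.lam_le_of_le (show n + 1 ≤ k by omega) hk
    have h₂ := h.lam_le_of_le hkn.le hk
    rw [abs_of_nonneg (by linarith)]
    linarith [le_abs_self (lam k - x)]

lemma abs_sq_sub_sq_div_le_abs_sub (h : NearBoundaryData α L K E₀ lam a) {n k : ℕ} {x : ℝ}
    (hnK : n < K) (hk : k ≤ K) (hkn : k ≠ n)
    (hx₁ : ((if n = 0 then 2 * E₀ - lam 0 else lam (n - 1)) + lam n) / 2 ≤ x)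
    (hx₂ : x ≤ (lam n + lam (n + 1)) / 2) :
    |(k : ℝ) ^ 2 - (n : ℝ) ^ 2| / (2 * α * (L : ℝ) ^ 2) ≤ |lam k - x| := by
  rw [show 2 * α * (L : ℝ) ^ 2 = α * (L : ℝ) ^ 2 * 2 by ring, ← div_div]
  linarith [h.2.2.1 k hk n hnK.le hkn, h.abs_sub_le_two_mul_abs_sub hnK hk hx₁ hx₂]

lemma center_term_le (h : NearBoundaryData α L K E₀ lam a) (hα : 0 < α) (hL : 0 < (L : ℝ))
    {n : ℕ} (hn : n ≤ K) {x y : ℝ} (hy : α * ((n : ℝ) + 1) / (L : ℝ) ^ 2 ≤ y) :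
    a n * y / ((lam n - x) ^ 2 + y ^ 2) ≤ ((n : ℝ) + 1) / L := by
  have hy₀ : 0 < y := lt_of_lt_of_le (by positivity) hy
  calc a n * y / ((lam n - x) ^ 2 + y ^ 2) ≤ a n / y :=
        mul_div_sq_add_sq_le_div_self (h.2.2.2.1 n hn) hy₀
    _ ≤ α * ((n : ℝ) + 1) ^ 2 / (L : ℝ) ^ 3 / (α * ((n : ℝ) + 1) / (L : ℝ) ^ 2) :=
        div_le_div₀ (by positivity) (h.2.2.2.2 n hn) (by positivity) hy
    _ = ((n : ℝ) + 1) / L := by field_simp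

lemma sum_erase_le (h : NearBoundaryData α L K E₀ lam a) (hα : 0 < α) (hL : 0 < (L : ℝ))
    {n : ℕ} (hnK : n < K) {x y : ℝ}
    (hx₁ : ((if n = 0 then 2 * E₀ - lam 0 else lam (n - 1)) + lam n) / 2 ≤ x)
    (hx₂ : x ≤ (lam n + lam (n + 1)) / 2) (hy : 0 < y) :
    ∑ k ∈ (range (K + 1)).erase n, a k * y / ((lam k - x) ^ 2 + y ^ 2) ≤
      32 * α ^ 2 * ((n : ℝ) + 1) / L + 2 * α ^ 2 * K / L := by
  set δ := ((n : ℝ) + 1) / (4 * α * (L : ℝ) ^ 2)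
  calc ∑ k ∈ (range (K + 1)).erase n, a k * y / ((lam k - x) ^ 2 + y ^ 2)
      ≤ ∑ k ∈ (range (K + 1)).erase n, (2 * α * ((n : ℝ) + 1) ^ 2 / (L : ℝ) ^ 3 *
          (y / ((((k : ℝ) - n) * δ) ^ 2 + y ^ 2)) + 2 * α ^ 2 / L) := by
        refine sum_le_sum fun k hk ↦ ?_
        obtain ⟨hkn, hk⟩ := mem_erase.1 hk
        have hkK : k ≤ K := Nat.lt_succ_iff.1 (mem_range.1 hk)
        exact weighted_lorentzian_le hα hL hy hkn (h.2.2.2.2 k hkK)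
          (h.abs_sq_sub_sq_div_le_abs_sub hnK hkK hkn hx₁ hx₂)
    _ = 2 * α * ((n : ℝ) + 1) ^ 2 / (L : ℝ) ^ 3 *
          ∑ k ∈ (range (K + 1)).erase n, y / ((((k : ℝ) - n) * δ) ^ 2 + y ^ 2) +
          K * (2 * α ^ 2 / L) := by
        rw [sum_add_distrib, ← mul_sum, sum_const, card_erase_of_mem (mem_range.2 (by omega)),
          card_range, nsmul_eq_mul, Nat.add_sub_cancel]
    _ ≤ 2 * α * ((n : ℝ) + 1) ^ 2 / (L : ℝ) ^ 3 * (4 / δ) + K * (2 * α ^ 2 / L) := by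
        gcongr
        exact sum_erase_lorentzian_le (by positivity) hy _ _
    _ = 32 * α ^ 2 * ((n : ℝ) + 1) / L + 2 * α ^ 2 * K / L := by
        simp only [δ]
        field_simp
        ring

end NearBoundaryData

/-- Lemma 4.2 (core estimate): in the box `A_{n,ε}`, i.e. for
`x ∈ [(λ_{n−1}+λ_n)/2, (λ_n+λ_{n+1})/2]` (with `λ_{−1} := 2E₀ − λ₀`) and
`C₀(n+1)/L² ≤ y ≤ ε⁵`, the imaginary part of the near-boundary sum is `O(ε)`. -/
theorem stmt1 (α : ℝ) (hα : 1 ≤ α) :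
    ∃ C₀ C ε₀ : ℝ, 1 ≤ C₀ ∧ 1 ≤ C ∧ 0 < ε₀ ∧ ε₀ < 1 ∧
    ∀ (ε : ℝ) (L K : ℕ) (E₀ : ℝ) (lam a : ℕ → ℝ),
      0 < ε → ε < ε₀ → 1 ≤ L → (K : ℝ) ≤ ε * L →
      NearBoundaryData α L K E₀ lam a →
      ∀ n : ℕ, n < K →
      ∀ x y : ℝ,
        ((if n = 0 then 2 * E₀ - lam 0 else lam (n - 1)) + lam n) / 2 ≤ x →
        x ≤ (lam n + lam (n + 1)) / 2 →
        C₀ * ((n : ℝ) + 1) / (L : ℝ) ^ 2 ≤ y → y ≤ ε ^ 5 →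
        ∑ k ∈ Finset.range (K + 1), a k * y / ((lam k - x) ^ 2 + y ^ 2) ≤ C * ε := by
  refine ⟨α, 35 * α ^ 2, 1 / 2, hα, by nlinarith, by norm_num, by norm_num, ?_⟩
  intro ε L K E₀ lam a hε _ hL hKL h n hnK x y hx₁ hx₂ hy _
  have hα₀ : 0 < α := by linarith
  have hL₀ : (0 : ℝ) < L := by exact_mod_cast hL
  have hy₀ : 0 < y := lt_of_lt_of_le (by positivity) hy
  have hKε : (K : ℝ) / L ≤ ε := (div_le_iff₀ hL₀).2 hKL
  have hnε : ((n : ℝ) + 1) / L ≤ ε :=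
    le_trans (div_le_div_of_nonneg_right (by exact_mod_cast hnK) hL₀.le) hKε
  rw [← add_sum_erase _ _ (mem_range.2 (Nat.lt_succ_of_lt hnK))]
  calc _ ≤ ((n : ℝ) + 1) / L + (32 * α ^ 2 * ((n : ℝ) + 1) / L + 2 * α ^ 2 * K / L) :=
        add_le_add (h.center_term_le hα₀ hL₀ hnK.le hy)
          (h.sum_erase_le hα₀ hL₀ hnK hx₁ hx₂ hy₀)
    _ = ((n : ℝ) + 1) / L + 32 * α ^ 2 * (((n : ℝ) + 1) / L) + 2 * α ^ 2 * (K / L) := by ring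
    _ ≤ ε + 32 * α ^ 2 * ε + 2 * α ^ 2 * ε := by gcongr
    _ ≤ 35 * α ^ 2 * ε := by
        nlinarith [mul_le_mul_of_nonneg_right (one_le_pow₀ hα : 1 ≤ α ^ 2) hε.le]
end

section
/- For every α ≥ 1 there exist C ≥ 1 and ε₀ ∈ (0,1), depending only on α, such that the following holds. Let ε ∈ (0, ε₀), L ≥ 1, K ≤ εL, let E₀ ∈ ℝ, and let (λ_k, a_k)_{0 ≤ k ≤ K} be near-boundary spectral data with constant α at E₀ satisfying in addition the generic-case regularity hypotheses (iv) and (v). Then for every integer n with 0 ≤ 2n ≤ K one has |Σ_{k=0, k≠n}^{K} a_k/(λ_k − λ_n)| ≤ C·ε. -/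
open Finset

/-- Generic-case regularity hypotheses (iv) and (v): the weights are Lipschitz in the
eigenvalues with constant `α/L`, and the eigenvalues are parametrized as
`lam k = ψ(k/L)` by a twice continuously differentiable function `ψ` on
`[0, (K+1)/L]` with `|ψ''| ≤ α`. -/
def GenericRegularity (α : ℝ) (L K : ℕ) (lam a : ℕ → ℝ) : Prop :=
  (∀ k ≤ K, ∀ m ≤ K, |a k - a m| ≤ α / (L : ℝ) * |lam k - lam m|) ∧
  ∃ ψ ψ' ψ'' : ℝ → ℝ,
    (∀ x ∈ Set.Icc (0 : ℝ) (((K : ℝ) + 1) / (L : ℝ)),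
      HasDerivWithinAt ψ (ψ' x) (Set.Icc (0 : ℝ) (((K : ℝ) + 1) / (L : ℝ))) x) ∧
    (∀ x ∈ Set.Icc (0 : ℝ) (((K : ℝ) + 1) / (L : ℝ)),
      HasDerivWithinAt ψ' (ψ'' x) (Set.Icc (0 : ℝ) (((K : ℝ) + 1) / (L : ℝ))) x) ∧
    ContinuousOn ψ'' (Set.Icc (0 : ℝ) (((K : ℝ) + 1) / (L : ℝ))) ∧
    (∀ x ∈ Set.Icc (0 : ℝ) (((K : ℝ) + 1) / (L : ℝ)), |ψ'' x| ≤ α) ∧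
    (∀ k ≤ K, lam k = ψ ((k : ℝ) / (L : ℝ)))

/-! The sum splits into the pairs `n - i, n + i` (`1 ≤ i ≤ n`) and the tail `2n < k ≤ K`.
Each tail term is `O(1/L)`, since `λ_k - λ_n ≳ k²/L²` there. The two terms of a pair have
opposite signs and size `n/(iL)`, but with `d± = |λ_{n±i} - λ_n|`,
`a₊/d₊ - a₋/d₋ = (a₊ - a₋)/d₊ + a₋(d₋ - d₊)/(d₊d₋)` is `O(1/L)`: the weights are
`α/L`-Lipschitz in `λ`, and `d₋ - d₊` is a second difference of `ψ`, hence `O(i²/L²)`.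
Since `n ≤ K/2 ≤ εL/2`, both parts are `O(ε)`. -/

theorem Convex.abs_add_sub_two_mul_le_of_hasDerivWithinAt {s : Set ℝ} (hs : Convex ℝ s)
    {ψ ψ' ψ'' : ℝ → ℝ} {M : ℝ}
    (hψ : ∀ x ∈ s, HasDerivWithinAt ψ (ψ' x) s x)
    (hψ' : ∀ x ∈ s, HasDerivWithinAt ψ' (ψ'' x) s x)
    (hM : ∀ x ∈ s, |ψ'' x| ≤ M) {x h : ℝ} (hh : 0 ≤ h) (hl : x - h ∈ s) (hr : x + h ∈ s) :
    |ψ (x + h) + ψ (x - h) - 2 * ψ x| ≤ 2 * M * h ^ 2 := by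
  have hIcc := hs.ordConnected.out hl hr
  have hmaps_add : Set.MapsTo (x + ·) (Set.Icc 0 h) s :=
    fun t ht => hIcc ⟨by linarith [ht.1], by linarith [ht.2]⟩
  have hmaps_sub : Set.MapsTo (x - ·) (Set.Icc 0 h) s :=
    fun t ht => hIcc ⟨by linarith [ht.2], by linarith [ht.1]⟩
  have hlip : ∀ u ∈ s, ∀ v ∈ s, |ψ' u - ψ' v| ≤ M * |u - v| := fun u hu v hv => by
    simpa only [Real.norm_eq_abs] using hs.norm_image_sub_le_of_norm_hasDerivWithin_le hψ'
      (fun y hy => by simpa only [Real.norm_eq_abs] using hM y hy) hv hu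
  have hderiv : ∀ t ∈ Set.Icc 0 h, HasDerivWithinAt (fun t => ψ (x + t) + ψ (x - t))
      (ψ' (x + t) - ψ' (x - t)) (Set.Icc 0 h) t := fun t ht => by
    have hadd := (hψ _ (hmaps_add ht)).comp t ((hasDerivWithinAt_id t _).const_add x) hmaps_add
    have hsub := (hψ _ (hmaps_sub ht)).comp t ((hasDerivWithinAt_id t _).const_sub x) hmaps_sub
    exact (hadd.add hsub).congr_deriv (by simp only [mul_one, mul_neg]; ring)
  have hbound : ∀ t ∈ Set.Icc 0 h, ‖ψ' (x + t) - ψ' (x - t)‖ ≤ 2 * M * h := fun t ht => by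
    have hM0 : 0 ≤ M := (abs_nonneg _).trans (hM _ hl)
    calc ‖ψ' (x + t) - ψ' (x - t)‖ ≤ M * |x + t - (x - t)| :=
          hlip _ (hmaps_add ht) _ (hmaps_sub ht)
      _ = M * (2 * t) := by rw [abs_of_nonneg (by linarith [ht.1])]; ring
      _ ≤ 2 * M * h := by nlinarith [ht.2]
  have key := (convex_Icc 0 h).norm_image_sub_le_of_norm_hasDerivWithin_le hderiv hbound
    (Set.left_mem_Icc.2 hh) (Set.right_mem_Icc.2 hh)
  simp only [add_zero, sub_zero, Real.norm_eq_abs, abs_of_nonneg hh] at key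
  calc |ψ (x + h) + ψ (x - h) - 2 * ψ x| = |ψ (x + h) + ψ (x - h) - (ψ x + ψ x)| := by
        rw [two_mul]
    _ ≤ 2 * M * h ^ 2 := by rw [sq, ← mul_assoc]; exact key

theorem Finset.sum_range_erase_eq_sum_Icc_add_sum_Ico {G : Type*} [AddCommGroup G] (f : ℕ → G)
    {n K : ℕ} (h : 2 * n ≤ K) :
    ∑ k ∈ (range (K + 1)).erase n, f k
      = ∑ i ∈ Icc 1 n, (f (n - i) + f (n + i)) + ∑ k ∈ Ico (2 * n + 1) (K + 1), f k := by
  have hleft : ∑ k ∈ range n, f k = ∑ i ∈ Icc 1 n, f (n - i) :=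
    sum_nbij' (n - ·) (n - ·) (fun k hk => by simp only [mem_range, mem_Icc] at hk ⊢; omega)
      (fun i hi => by simp only [mem_range, mem_Icc] at hi ⊢; omega)
      (fun k hk => by simp only [mem_range] at hk; omega)
      (fun i hi => by simp only [mem_Icc] at hi; omega)
      (fun k hk => by rw [Nat.sub_sub_self (mem_range.1 hk).le])
  have hright : ∑ k ∈ Ico (n + 1) (2 * n + 1), f k = ∑ i ∈ Icc 1 n, f (n + i) :=
    sum_nbij' (· - n) (n + ·) (fun k hk => by simp only [mem_Ico, mem_Icc] at hk ⊢; omega)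
      (fun i hi => by simp only [mem_Ico, mem_Icc] at hi ⊢; omega)
      (fun k hk => by simp only [mem_Ico] at hk; omega)
      (fun i _ => Nat.add_sub_cancel_left n i)
      (fun k hk => by rw [Nat.add_sub_cancel' (Nat.le_of_succ_le (mem_Ico.1 hk).1)])
  rw [sum_erase_eq_sub (mem_range.2 (by omega)), sum_add_distrib, ← hleft, ← hright,
    range_eq_Ico, ← sum_Ico_consecutive f (by omega : 0 ≤ n + 1) (by omega : n + 1 ≤ K + 1),
    ← sum_Ico_consecutive f (by omega : n + 1 ≤ 2 * n + 1) (by omega : 2 * n + 1 ≤ K + 1),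
    sum_Ico_succ_top (Nat.zero_le n), ← range_eq_Ico]
  abel

section PairCancellation

variable {α L i n dp dm ap am : ℝ}

theorem abs_sub_div_le_of_gaps (hα : 1 ≤ α) (hL : 0 < L) (hi : 0 ≤ i) (hin : i ≤ n)
    (hdp : i * (2 * n + i) ≤ dp * (α * L ^ 2)) (hdd : |dm - dp| * L ^ 2 ≤ 2 * α * i ^ 2)
    (ha : |ap - am| * L ≤ α * (dp + dm)) (hdp0 : 0 < dp) :
    |ap - am| / dp ≤ 3 * α ^ 3 / L := by
  have hgap : dm - dp ≤ 2 / 3 * α ^ 2 * dp := by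
    have h3 : 3 * i ^ 2 ≤ dp * (α * L ^ 2) := by nlinarith
    have : (dm - dp) * L ^ 2 ≤ (2 / 3 * α ^ 2 * dp) * L ^ 2 := by
      nlinarith [le_abs_self (dm - dp), mul_le_mul_of_nonneg_left h3 (by positivity : (0 : ℝ) ≤ α)]
    exact le_of_mul_le_mul_right this (by positivity)
  rw [div_le_div_iff₀ hdp0 hL]
  have hα3 : 2 * α ≤ 7 / 3 * α ^ 3 := by nlinarith
  nlinarith [mul_le_mul_of_nonneg_left hgap (by positivity : (0 : ℝ) ≤ α),
    mul_le_mul_of_nonneg_right hα3 hdp0.le]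

theorem mul_abs_sub_div_le_of_gaps (hα : 1 ≤ α) (hL : 0 < L) (hi : 0 ≤ i) (hin : i ≤ n)
    (hn : 1 ≤ n) (hdp : i * (2 * n + i) ≤ dp * (α * L ^ 2)) (hdm : i * n ≤ dm * (α * L ^ 2))
    (hdd : |dm - dp| * L ^ 2 ≤ 2 * α * i ^ 2) (ham' : am * L ^ 3 ≤ α * (n + 1) ^ 2)
    (hdp0 : 0 < dp) (hdm0 : 0 < dm) :
    am * |dm - dp| / (dp * dm) ≤ 4 * α ^ 4 / L := by
  rw [div_le_div_iff₀ (by positivity) hL]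
  have hsq : (n + 1) ^ 2 ≤ 2 * (2 * n + i) * n := by nlinarith
  refine le_of_mul_le_mul_right ?_ (by positivity : (0 : ℝ) < L ^ 4)
  calc am * |dm - dp| * L * L ^ 4 = (am * L ^ 3) * (|dm - dp| * L ^ 2) := by ring
    _ ≤ (α * (n + 1) ^ 2) * (2 * α * i ^ 2) := mul_le_mul ham' hdd (by positivity) (by positivity)
    _ ≤ 4 * α ^ 2 * ((i * (2 * n + i)) * (i * n)) := by
        nlinarith [mul_le_mul_of_nonneg_left hsq (by positivity : (0 : ℝ) ≤ 2 * α ^ 2 * i ^ 2)]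
    _ ≤ 4 * α ^ 2 * ((dp * (α * L ^ 2)) * (dm * (α * L ^ 2))) := by
        gcongr
    _ = 4 * α ^ 4 * (dp * dm) * L ^ 4 := by ring

theorem abs_div_sub_div_le_of_gaps (hα : 1 ≤ α) (hL : 0 < L) (hi : 1 ≤ i) (hin : i ≤ n)
    (hdp : i * (2 * n + i) ≤ dp * (α * L ^ 2)) (hdm : i * n ≤ dm * (α * L ^ 2))
    (hdd : |dm - dp| * L ^ 2 ≤ 2 * α * i ^ 2) (ha : |ap - am| * L ≤ α * (dp + dm))
    (ham : 0 ≤ am) (ham' : am * L ^ 3 ≤ α * (n + 1) ^ 2) :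
    |ap / dp - am / dm| ≤ 7 * α ^ 4 / L := by
  have hαL : 0 < α * L ^ 2 := by positivity
  have hdp0 : 0 < dp :=
    pos_of_mul_pos_left ((by nlinarith : 0 < i * (2 * n + i)).trans_le hdp) hαL.le
  have hdm0 : 0 < dm := pos_of_mul_pos_left ((by nlinarith : 0 < i * n).trans_le hdm) hαL.le
  have hsplit : ap / dp - am / dm = (ap - am) / dp + am * (dm - dp) / (dp * dm) := by
    field_simp
    ring
  calc |ap / dp - am / dm| ≤ |ap - am| / dp + am * |dm - dp| / (dp * dm) := by
        rw [hsplit]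
        refine (abs_add_le _ _).trans_eq ?_
        rw [abs_div, abs_div, abs_mul, abs_of_pos hdp0, abs_of_nonneg ham,
          abs_of_pos (mul_pos hdp0 hdm0)]
    _ ≤ 3 * α ^ 3 / L + 4 * α ^ 4 / L := add_le_add
        (abs_sub_div_le_of_gaps hα hL (by linarith) hin hdp hdd ha hdp0)
        (mul_abs_sub_div_le_of_gaps hα hL (by linarith) hin (by linarith) hdp hdm hdd ham'
          hdp0 hdm0)
    _ ≤ 7 * α ^ 4 / L := by
        rw [← add_div]
        gcongr
        nlinarith [pow_le_pow_right₀ hα (by norm_num : 3 ≤ 4)]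

end PairCancellation

theorem GenericRegularity.abs_second_diff_mul_sq_le {α : ℝ} {L K : ℕ} {lam a : ℕ → ℝ}
    (hG : GenericRegularity α L K lam a) (hL : 0 < L) {n i : ℕ} (hin : i ≤ n) (hK : n + i ≤ K) :
    |lam (n + i) + lam (n - i) - 2 * lam n| * (L : ℝ) ^ 2 ≤ 2 * α * (i : ℝ) ^ 2 := by
  obtain ⟨-, ψ, ψ', ψ'', hψ, hψ', -, hψ''_le, hlam⟩ := hG
  have hL' : (0 : ℝ) < L := by exact_mod_cast hL
  have hnK : ((n : ℝ) + i) ≤ K := by exact_mod_cast hK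
  have hin' : (i : ℝ) ≤ n := by exact_mod_cast hin
  have hmem : ∀ y : ℝ, 0 ≤ y → y ≤ K → y / L ∈ Set.Icc (0 : ℝ) ((K + 1) / L) := fun y h0 h1 =>
    ⟨by positivity, by gcongr; linarith⟩
  have hsd := (convex_Icc _ _).abs_add_sub_two_mul_le_of_hasDerivWithinAt hψ hψ' hψ''_le
    (x := n / L) (h := i / L) (by positivity)
    (by rw [← sub_div]; exact hmem _ (by linarith) (by linarith))
    (by rw [← add_div]; exact hmem _ (by positivity) hnK)
  rw [← add_div, ← sub_div, ← Nat.cast_add, ← Nat.cast_sub hin, ← hlam _ hK,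
    ← hlam _ (by omega), ← hlam _ (by omega), div_pow, mul_div_assoc'] at hsd
  exact (le_div_iff₀ (by positivity)).1 hsd

namespace NearBoundaryData

variable {α : ℝ} {L K : ℕ} {E₀ : ℝ} {lam a : ℕ → ℝ}

theorem sq_sub_sq_le_gap (hD : NearBoundaryData α L K E₀ lam a) (hα : 0 < α) (hL : 0 < L)
    {m k : ℕ} (hmk : m < k) (hk : k ≤ K) :
    (k : ℝ) ^ 2 - (m : ℝ) ^ 2 ≤ (lam k - lam m) * (α * (L : ℝ) ^ 2) := by
  have hgap := hD.2.2.1 k hk m (hmk.le.trans hk) hmk.ne'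
  have hkm : (m : ℝ) < k := by exact_mod_cast hmk
  rwa [abs_of_nonneg (by nlinarith [(Nat.cast_nonneg m : (0 : ℝ) ≤ m)]),
    abs_of_pos (sub_pos.2 (hD.1 m k hmk hk)), div_le_iff₀ (by positivity)] at hgap

theorem weight_mul_le (hD : NearBoundaryData α L K E₀ lam a) (hL : 0 < L) {k : ℕ} (hk : k ≤ K) :
    a k * (L : ℝ) ^ 3 ≤ α * ((k : ℝ) + 1) ^ 2 :=
  (le_div_iff₀ (by positivity)).1 (hD.2.2.2.2 k hk)

theorem div_gap_le_of_two_mul_lt (hD : NearBoundaryData α L K E₀ lam a) (hα : 0 < α)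
    (hL : 0 < L) {n k : ℕ} (hnk : 2 * n < k) (hk : k ≤ K) :
    a k / (lam k - lam n) ≤ 6 * α ^ 2 / L := by
  have hgap := hD.sq_sub_sq_le_gap hα hL (by omega : n < k) hk
  have hpos : 0 < lam k - lam n := sub_pos.2 (hD.1 n k (by omega) hk)
  have hnk' : 2 * (n : ℝ) + 1 ≤ k := by exact_mod_cast hnk
  have hsq : ((k : ℝ) + 1) ^ 2 ≤ 6 * ((k : ℝ) ^ 2 - (n : ℝ) ^ 2) := by
    nlinarith [(Nat.cast_nonneg n : (0 : ℝ) ≤ n)]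
  rw [div_le_div_iff₀ hpos (by positivity)]
  refine le_of_mul_le_mul_right ?_ (by positivity : (0 : ℝ) < (L : ℝ) ^ 2)
  calc a k * L * L ^ 2 = a k * L ^ 3 := by ring
    _ ≤ α * ((k : ℝ) + 1) ^ 2 := hD.weight_mul_le hL hk
    _ ≤ α * (6 * ((lam k - lam n) * (α * (L : ℝ) ^ 2))) := by gcongr; linarith
    _ = 6 * α ^ 2 * (lam k - lam n) * L ^ 2 := by ring

theorem abs_sum_Ico_div_gap_le (hD : NearBoundaryData α L K E₀ lam a) (hα : 0 < α)
    (hL : 0 < L) (n : ℕ) :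
    |∑ k ∈ Ico (2 * n + 1) (K + 1), a k / (lam k - lam n)| ≤ K * (6 * α ^ 2 / L) := by
  have hterm : ∀ k ∈ Ico (2 * n + 1) (K + 1), 0 ≤ a k / (lam k - lam n) := fun k hk => by
    rw [mem_Ico] at hk
    exact div_nonneg (hD.2.2.2.1 k (by omega)) (sub_pos.2 (hD.1 n k (by omega) (by omega))).le
  rw [abs_of_nonneg (sum_nonneg hterm)]
  calc ∑ k ∈ Ico (2 * n + 1) (K + 1), a k / (lam k - lam n)
      ≤ #(Ico (2 * n + 1) (K + 1)) • (6 * α ^ 2 / L) := sum_le_card_nsmul _ _ _ fun k hk => by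
        rw [mem_Ico] at hk
        exact hD.div_gap_le_of_two_mul_lt hα hL (by omega) (by omega)
    _ ≤ K * (6 * α ^ 2 / L) := by
        rw [nsmul_eq_mul, Nat.card_Ico]
        gcongr
        exact_mod_cast (by omega : K + 1 - (2 * n + 1) ≤ K)

theorem abs_pair_le (hD : NearBoundaryData α L K E₀ lam a)
    (hG : GenericRegularity α L K lam a) (hα : 1 ≤ α) (hL : 0 < L) {n i : ℕ} (hi : 1 ≤ i)
    (hin : i ≤ n) (hK : n + i ≤ K) :
    |a (n - i) / (lam (n - i) - lam n) + a (n + i) / (lam (n + i) - lam n)| ≤ 7 * α ^ 4 / L := by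
  have hα0 : 0 < α := by linarith
  have hL' : (0 : ℝ) < L := by exact_mod_cast hL
  have hcast : ((n - i : ℕ) : ℝ) = n - i := Nat.cast_sub hin
  have hin' : (i : ℝ) ≤ n := by exact_mod_cast hin
  have hdp : (i : ℝ) * (2 * n + i) ≤ (lam (n + i) - lam n) * (α * L ^ 2) := by
    have := hD.sq_sub_sq_le_gap hα0 hL (by omega : n < n + i) hK
    push_cast at this
    linarith
  have hdm : (i : ℝ) * n ≤ (lam n - lam (n - i)) * (α * L ^ 2) := by
    have := hD.sq_sub_sq_le_gap hα0 hL (by omega : n - i < n) (by omega)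
    rw [hcast] at this
    nlinarith
  have hdd : |(lam n - lam (n - i)) - (lam (n + i) - lam n)| * L ^ 2 ≤ 2 * α * i ^ 2 := by
    have := hG.abs_second_diff_mul_sq_le hL hin hK
    rwa [← abs_neg, show -(lam (n + i) + lam (n - i) - 2 * lam n)
      = (lam n - lam (n - i)) - (lam (n + i) - lam n) by ring] at this
  have ha : |a (n + i) - a (n - i)| * L ≤ α * ((lam (n + i) - lam n) + (lam n - lam (n - i))) := by
    have := hG.1 (n + i) hK (n - i) (by omega)
    rw [abs_of_pos (sub_pos.2 (hD.1 (n - i) (n + i) (by omega) hK))] at this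
    calc |a (n + i) - a (n - i)| * L ≤ α / L * (lam (n + i) - lam (n - i)) * L := by gcongr
      _ = _ := by field_simp; ring
  have ham' : a (n - i) * L ^ 3 ≤ α * ((n : ℝ) + 1) ^ 2 := by
    have := hD.weight_mul_le hL (by omega : n - i ≤ K)
    rw [hcast] at this
    exact this.trans (by gcongr; linarith)
  have := abs_div_sub_div_le_of_gaps hα hL' (by exact_mod_cast hi) hin' hdp hdm hdd ha
    (hD.2.2.2.1 _ (by omega)) ham'
  rwa [← neg_sub (lam n), div_neg, neg_add_eq_sub]

theorem abs_sum_pairs_le (hD : NearBoundaryData α L K E₀ lam a)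
    (hG : GenericRegularity α L K lam a) (hα : 1 ≤ α) (hL : 0 < L) {n : ℕ} (hn : 2 * n ≤ K) :
    |∑ i ∈ Icc 1 n, (a (n - i) / (lam (n - i) - lam n) + a (n + i) / (lam (n + i) - lam n))|
      ≤ n * (7 * α ^ 4 / L) := by
  calc _ ≤ ∑ i ∈ Icc 1 n, |a (n - i) / (lam (n - i) - lam n) + a (n + i) / (lam (n + i) - lam n)| :=
        abs_sum_le_sum_abs _ _
    _ ≤ #(Icc 1 n) • (7 * α ^ 4 / L) := sum_le_card_nsmul _ _ _ fun i hi => by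
        rw [mem_Icc] at hi
        exact hD.abs_pair_le hG hα hL hi.1 hi.2 (by omega)
    _ = n * (7 * α ^ 4 / L) := by rw [Nat.card_Icc, nsmul_eq_mul, add_tsub_cancel_right]

end NearBoundaryData

/-- Main step of Lemma 5.1: the near-boundary part of the sum with the `n`-th term
removed, evaluated at `λ_n`, is of size `ε` thanks to a two-sided cancellation. -/
theorem stmt5 (α : ℝ) (hα : 1 ≤ α) :
    ∃ C ε₀ : ℝ, 1 ≤ C ∧ 0 < ε₀ ∧ ε₀ < 1 ∧
    ∀ (ε : ℝ) (L K : ℕ) (E₀ : ℝ) (lam a : ℕ → ℝ),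
      0 < ε → ε < ε₀ → 1 ≤ L → (K : ℝ) ≤ ε * L →
      NearBoundaryData α L K E₀ lam a →
      GenericRegularity α L K lam a →
      ∀ n : ℕ, 2 * n ≤ K →
      |∑ k ∈ (Finset.range (K + 1)).erase n, a k / (lam k - lam n)| ≤ C * ε := by
  refine ⟨10 * α ^ 4, 1 / 2, by nlinarith [one_le_pow₀ (n := 4) hα], by norm_num, by norm_num, ?_⟩
  intro ε L K E₀ lam a hε _ hL hKL hD hG n hn
  have hL' : (0 : ℝ) < L := by exact_mod_cast hL
  have hα0 : 0 < α := by linarith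
  have hnK : 2 * (n : ℝ) ≤ K := by exact_mod_cast hn
  rw [sum_range_erase_eq_sum_Icc_add_sum_Ico _ hn]
  calc _ ≤ n * (7 * α ^ 4 / L) + K * (6 * α ^ 2 / L) := (abs_add_le _ _).trans <|
        add_le_add (hD.abs_sum_pairs_le hG hα hL hn) (hD.abs_sum_Ico_div_gap_le hα0 hL n)
    _ = (7 / 2 * α ^ 4 * (2 * n) + 6 * α ^ 2 * K) / L := by ring
    _ ≤ (7 / 2 * α ^ 4 * (ε * L) + 6 * α ^ 4 * (ε * L)) / L := by
        have hα24 : α ^ 2 ≤ α ^ 4 := pow_le_pow_right₀ hα (by norm_num)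
        gcongr ?_ / _
        nlinarith
    _ ≤ 10 * α ^ 4 * ε := by
        rw [div_le_iff₀ hL']
        nlinarith [mul_pos (mul_pos (pow_pos hα0 4) hε) hL']
end

section
/- For all α ≥ 1 and C₀ ≥ 1 there exist C ≥ 1, ε₀ ∈ (0,1), and for each ε ∈ (0, ε₀) an L₀ = L₀(ε, α), such that the following holds. Let ε ∈ (0, ε₀), L ≥ L₀, K ≤ εL, N ≥ K, let E₀ ∈ ℝ, let (λ_k, a_k)_{0 ≤ k ≤ K} be near-boundary spectral data with constant α at E₀, and let (λ_k, a_k)_{K < k ≤ N} be far spectral data. Then for every integer n with 0 ≤ n < K and every E ∈ M_n := {x − iy : x ∈ [(λ_{n−1} + λ_n)/2, (λ_n + λ_{n+1})/2], y ∈ [0, C₀(n+1)/L²]} (with the convention λ_{−1} := 2(E₀ − ε) − λ₀), one has |Σ_{k=0, k≠n}^{N} a_k·(1/(λ_k − E) − 1/(λ_k − λ_n))| ≤ C·L·|E − λ_n|. -/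
open Finset

/-- Far spectral data (indices `K < k ≤ N`): eigenvalues at distance at least
`3αε²` from `E₀`, avoiding `[E₀ − 2ε, E₀]`, with nonnegative weights, together with
the normalization `Σ_{k=0}^N a k ≤ 1`. -/
def FarData (α ε : ℝ) (K N : ℕ) (E₀ : ℝ) (lam a : ℕ → ℝ) : Prop :=
  (∀ k : ℕ, K < k → k ≤ N → 3 * α * ε ^ 2 ≤ |lam k - E₀|) ∧
  (∀ k : ℕ, K < k → k ≤ N → lam k ∉ Set.Icc (E₀ - 2 * ε) E₀) ∧
  (∀ k : ℕ, K < k → k ≤ N → 0 ≤ a k) ∧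
  (∑ k ∈ Finset.range (N + 1), a k ≤ 1)

/-!
Each summand equals `a_k (E − λ_n) / ((λ_k − E)(λ_k − λ_n))`, so it suffices to bound the two
denominators from below. For a near index `k ≤ K`, `Re E` lies in the cell of `λ_n` between the
midpoints of its neighbours, so `|λ_k − E| ≥ |λ_k − λ_n| / 2 ≥ |k² − n²| / (2αL²)`; together with
`a_k ≤ α(k+1)²/L³` this bounds the summand by `8α³L/(k−n)² · |E − λ_n|`, and `∑_{k≠n} (k−n)⁻² ≤ 4`.
For `K ≤ εL` and `L` large, `λ_n` and `Re E` lie in `[E₀ − ε, E₀ + 9αε²/4]`, at distance at least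
`ε²/2` from every far eigenvalue; as the weights sum to at most `1`, the far part is at most
`4ε⁻⁴ |E − λ_n| ≤ L |E − λ_n|`.
-/

lemma two_le_mul_of_four_div_pow_four_le {ε L : ℝ} (hε : 0 < ε) (hε1 : ε ≤ 1)
    (h : 4 / ε ^ 4 ≤ L) : 2 ≤ ε * L := by
  have : 2 / ε ≤ 4 / ε ^ 4 := by
    rw [div_le_div_iff₀ hε (by positivity)]
    nlinarith [pow_le_one₀ hε.le hε1 (n := 3)]
  rw [div_le_iff₀ hε] at this
  nlinarith

lemma sum_inv_sq_le_two_of_injOn {s : Finset ℕ} {g : ℕ → ℕ} (hg : Set.InjOn g s)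
    (hg0 : ∀ k ∈ s, g k ≠ 0) : ∑ k ∈ s, ((g k : ℝ) ^ 2)⁻¹ ≤ 2 := by
  rw [← sum_image (f := fun i : ℕ => ((i : ℝ) ^ 2)⁻¹) hg]
  calc ∑ i ∈ s.image g, ((i : ℝ) ^ 2)⁻¹
      ≤ ∑ i ∈ Ioo 0 ((s.image g).sup id + 1), ((i : ℝ) ^ 2)⁻¹ := by
        refine sum_le_sum_of_subset_of_nonneg (fun i hi => ?_) (fun _ _ _ => by positivity)
        obtain ⟨k, hk, rfl⟩ := mem_image.mp hi
        have := le_sup (f := id) hi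
        simp only [mem_Ioo, id] at this ⊢
        exact ⟨Nat.pos_of_ne_zero (hg0 k hk), by omega⟩
    _ ≤ 2 := by simpa using sum_Ioo_inv_sq_le (α := ℝ) 0 ((s.image g).sup id + 1)

lemma sum_erase_inv_sq_sub_le_four (s : Finset ℕ) (n : ℕ) :
    ∑ k ∈ s.erase n, (((k : ℝ) - n) ^ 2)⁻¹ ≤ 4 := by
  rw [← sum_filter_add_sum_filter_not _ (· < n)]
  have below : ∑ k ∈ (s.erase n).filter (· < n), (((k : ℝ) - n) ^ 2)⁻¹ ≤ 2 := by
    calc _ = ∑ k ∈ (s.erase n).filter (· < n), (((n - k : ℕ) : ℝ) ^ 2)⁻¹ := by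
          refine sum_congr rfl fun k hk => ?_
          rw [Nat.cast_sub (mem_filter.mp hk).2.le, ← neg_sub, neg_sq]
      _ ≤ 2 := sum_inv_sq_le_two_of_injOn
          (fun k hk m hm h => by simp only [coe_filter, Set.mem_ofPred_eq] at hk hm; omega)
          (fun k hk => by simp only [mem_filter] at hk; omega)
  have above : ∑ k ∈ (s.erase n).filter (¬ · < n), (((k : ℝ) - n) ^ 2)⁻¹ ≤ 2 := by
    calc _ = ∑ k ∈ (s.erase n).filter (¬ · < n), (((k - n : ℕ) : ℝ) ^ 2)⁻¹ := by
          refine sum_congr rfl fun k hk => ?_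
          rw [Nat.cast_sub (not_lt.mp (mem_filter.mp hk).2)]
      _ ≤ 2 := sum_inv_sq_le_two_of_injOn
          (fun k hk m hm h => by
            simp only [coe_filter, mem_erase, Set.mem_ofPred_eq] at hk hm
            omega)
          (fun k hk => by simp only [mem_filter, mem_erase] at hk; omega)
  linarith

lemma norm_div_sub_div_le (c : ℂ) {z w : ℂ} {u v : ℝ} (hu : 0 < u) (hv : 0 < v)
    (hz : u ≤ ‖z‖) (hw : v ≤ ‖w‖) : ‖c / z - c / w‖ ≤ ‖c‖ / (u * v) * ‖w - z‖ := by
  have hz0 : z ≠ 0 := norm_pos_iff.mp (hu.trans_le hz)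
  have hw0 : w ≠ 0 := norm_pos_iff.mp (hv.trans_le hw)
  calc ‖c / z - c / w‖ = ‖c‖ / (‖z‖ * ‖w‖) * ‖w - z‖ := by
        rw [show c / z - c / w = c * (w - z) / (z * w) by field_simp, norm_div, norm_mul,
          norm_mul]
        ring
    _ ≤ ‖c‖ / (u * v) * ‖w - z‖ := by gcongr

lemma sq_add_one_div_sq_sub_sq_le {k n : ℕ} (h : k ≠ n) :
    ((k : ℝ) + 1) ^ 2 / ((k : ℝ) ^ 2 - n ^ 2) ^ 2 ≤ 4 / ((k : ℝ) - n) ^ 2 := by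
  have hkn : (k : ℝ) - n ≠ 0 := sub_ne_zero.mpr (by exact_mod_cast h)
  have hsum : (k : ℝ) + 1 ≤ 2 * (k + n) := by
    have : 1 ≤ k + 2 * n := by omega
    have : (1 : ℝ) ≤ k + 2 * n := by exact_mod_cast this
    linarith
  have hadd : (0 : ℝ) < k + n := by linarith [(k.cast_nonneg : (0 : ℝ) ≤ k)]
  rw [show (k : ℝ) ^ 2 - n ^ 2 = (k - n) * (k + n) by ring, mul_pow,
    div_le_div_iff₀ (by positivity) (by positivity)]
  have : ((k : ℝ) + 1) ^ 2 ≤ 4 * (k + n) ^ 2 := by nlinarith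
  nlinarith [sq_nonneg ((k : ℝ) - n)]

lemma norm_ofReal_div_sub_div_le {a l μ u v : ℝ} {E : ℂ} (ha : 0 ≤ a) (hu : 0 < u) (hv : 0 < v)
    (hE : u ≤ |l - E.re|) (hμ : v ≤ |l - μ|) :
    ‖(a : ℂ) / (l - E) - a / (l - μ)‖ ≤ a / (u * v) * ‖E - μ‖ := by
  have hz : u ≤ ‖(l : ℂ) - E‖ := hE.trans (by simpa using Complex.abs_re_le_norm ((l : ℂ) - E))
  have hw : v ≤ ‖(l : ℂ) - μ‖ := by rwa [← Complex.ofReal_sub, Complex.norm_real]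
  simpa [Complex.norm_real, abs_of_nonneg ha] using norm_div_sub_div_le (a : ℂ) hu hv hz hw

lemma abs_sub_le_two_mul_abs_sub_of_mem_cell {lam : ℕ → ℝ} {K n k : ℕ} {x : ℝ}
    (hmono : StrictMonoOn lam (Set.Iic K)) (hk : k ≤ K) (hn : n ≤ K) (hkn : k ≠ n)
    (hleft : 0 < n → (lam (n - 1) + lam n) / 2 ≤ x) (hright : x ≤ (lam n + lam (n + 1)) / 2) :
    |lam k - lam n| ≤ 2 * |lam k - x| := by
  rcases hkn.lt_or_gt with hlt | hgt
  · have hkn' : lam k ≤ lam (n - 1) :=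
      hmono.monotoneOn (Set.mem_Iic.mpr hk) (Set.mem_Iic.mpr (by omega)) (by omega)
    have hn' : lam (n - 1) < lam n :=
      hmono (Set.mem_Iic.mpr (by omega)) (Set.mem_Iic.mpr hn) (by omega)
    rw [abs_sub_comm, abs_of_pos (by linarith)]
    linarith [neg_le_abs (lam k - x), hleft (by omega)]
  · have hkn' : lam (n + 1) ≤ lam k :=
      hmono.monotoneOn (Set.mem_Iic.mpr (by omega)) (Set.mem_Iic.mpr hk) (by omega)
    have hn' : lam n < lam (n + 1) :=
      hmono (Set.mem_Iic.mpr hn) (Set.mem_Iic.mpr (by omega)) (by omega)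
    rw [abs_of_pos (by linarith)]
    linarith [le_abs_self (lam k - x)]

lemma half_sq_le_abs_sub_of_far {α ε E₀ l : ℝ} (hα : 1 ≤ α) (hε : 0 < ε) (hε2 : ε ≤ 2)
    (hl : 3 * α * ε ^ 2 ≤ |l - E₀|) (hl' : l ∉ Set.Icc (E₀ - 2 * ε) E₀) :
    ∀ y ∈ Set.Icc (E₀ - ε) (E₀ + 9 / 4 * α * ε ^ 2), ε ^ 2 / 2 ≤ |l - y| := by
  intro y hy
  rcases le_or_gt l E₀ with hle | hgt
  · have hl2 : l < E₀ - 2 * ε := by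
      by_contra! h
      exact hl' ⟨h, hle⟩
    rw [abs_sub_comm, abs_of_pos (by linarith [hy.1])]
    nlinarith [hy.1]
  · rw [abs_of_pos (sub_pos.mpr hgt)] at hl
    rw [abs_of_pos (by nlinarith [hy.2])]
    nlinarith [hy.2]

namespace NearBoundaryData

variable {α ε E₀ : ℝ} {L K : ℕ} {lam a : ℕ → ℝ}

lemma strictMonoOn (h : NearBoundaryData α L K E₀ lam a) : StrictMonoOn lam (Set.Iic K) :=
  fun k _ m hm hkm => h.1 k m hkm hm

lemma lt_lam (h : NearBoundaryData α L K E₀ lam a) (hα : 0 < α) (hL : 0 < L) {k : ℕ}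
    (hk : k ≤ K) : E₀ < lam k := by
  have := (h.2.1 k hk).1
  have : 0 < ((k : ℝ) + 1) ^ 2 / (α * (L : ℝ) ^ 2) := by positivity
  linarith

lemma lam_le (h : NearBoundaryData α L K E₀ lam a) (hα : 0 < α) (hL : 0 < L)
    (hεL : (K : ℝ) + 1 ≤ 3 / 2 * (ε * L)) {k : ℕ} (hk : k ≤ K) :
    lam k ≤ E₀ + 9 / 4 * α * ε ^ 2 := by
  have hkK : (k : ℝ) + 1 ≤ 3 / 2 * (ε * L) := by
    have : (k : ℝ) ≤ K := by exact_mod_cast hk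
    linarith
  have := (h.2.1 k hk).2
  calc lam k ≤ E₀ + α * ((k : ℝ) + 1) ^ 2 / (L : ℝ) ^ 2 := by linarith
    _ ≤ E₀ + 9 / 4 * α * ε ^ 2 := by
      have hsq : ((k : ℝ) + 1) ^ 2 ≤ (3 / 2 * (ε * L)) ^ 2 := by gcongr
      rw [add_le_add_iff_left, div_le_iff₀ (by positivity)]
      nlinarith

lemma re_mem_Icc (h : NearBoundaryData α L K E₀ lam a) (hα : 0 < α) (hL : 0 < L) (hε : 0 ≤ ε)
    (hεL : (K : ℝ) + 1 ≤ 3 / 2 * (ε * L)) {n : ℕ} (hn : n < K) {E : ℂ}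
    (hleft : ((if n = 0 then 2 * (E₀ - ε) - lam 0 else lam (n - 1)) + lam n) / 2 ≤ E.re)
    (hright : E.re ≤ (lam n + lam (n + 1)) / 2) :
    E.re ∈ Set.Icc (E₀ - ε) (E₀ + 9 / 4 * α * ε ^ 2) := by
  refine ⟨?_, hright.trans ?_⟩
  · split_ifs at hleft with h0
    · subst h0
      linarith
    · linarith [h.lt_lam hα hL (k := n - 1) (by omega), h.lt_lam hα hL hn.le]
  · linarith [h.lam_le hα hL hεL hn.le, h.lam_le hα hL hεL (k := n + 1) hn]

lemma norm_sub_le (h : NearBoundaryData α L K E₀ lam a) (hα : 0 < α) (hL : 0 < L) {k n : ℕ}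
    (hk : k ≤ K) (hn : n ≤ K) (hkn : k ≠ n) {E : ℂ}
    (hE : |lam k - lam n| ≤ 2 * |lam k - E.re|) :
    ‖(a k : ℂ) / (lam k - E) - a k / (lam k - lam n)‖ ≤
      8 * α ^ 3 * L / ((k : ℝ) - n) ^ 2 * ‖E - lam n‖ := by
  set A := (k : ℝ) ^ 2 - n ^ 2
  have hA : 0 < |A| := abs_pos.mpr <| sub_ne_zero.mpr <| by
    exact_mod_cast (Nat.pow_left_injective two_ne_zero).ne hkn
  have hsep : |A| / (α * L ^ 2) ≤ |lam k - lam n| := h.2.2.1 k hk n hn hkn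
  calc _ ≤ a k / (|A| / (α * L ^ 2) / 2 * (|A| / (α * L ^ 2))) * ‖E - lam n‖ :=
        norm_ofReal_div_sub_div_le (h.2.2.2.1 k hk) (by positivity) (by positivity)
          (by linarith) hsep
    _ ≤ α * ((k : ℝ) + 1) ^ 2 / L ^ 3 / (|A| / (α * L ^ 2) / 2 * (|A| / (α * L ^ 2))) *
          ‖E - lam n‖ := by
        gcongr
        exact h.2.2.2.2 k hk
    _ = 2 * α ^ 3 * L * (((k : ℝ) + 1) ^ 2 / A ^ 2) * ‖E - lam n‖ := by
        rw [← sq_abs A]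
        field_simp
    _ ≤ 2 * α ^ 3 * L * (4 / ((k : ℝ) - n) ^ 2) * ‖E - lam n‖ := by
        gcongr 2 * α ^ 3 * L * ?_ * _
        exact sq_add_one_div_sq_sub_sq_le hkn
    _ = 8 * α ^ 3 * L / ((k : ℝ) - n) ^ 2 * ‖E - lam n‖ := by ring

lemma sum_norm_le (h : NearBoundaryData α L K E₀ lam a) (hα : 0 < α) (hL : 0 < L) {n : ℕ}
    (hn : n ≤ K) {E : ℂ} (hE : ∀ k ≤ K, k ≠ n → |lam k - lam n| ≤ 2 * |lam k - E.re|)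
    (s : Finset ℕ) :
    ∑ k ∈ (s.erase n).filter (· ≤ K), ‖(a k : ℂ) / (lam k - E) - a k / (lam k - lam n)‖ ≤
      32 * α ^ 3 * L * ‖E - lam n‖ := by
  rw [filter_erase]
  calc _ ≤ ∑ k ∈ (s.filter (· ≤ K)).erase n,
          8 * α ^ 3 * L * ‖E - lam n‖ * (((k : ℝ) - n) ^ 2)⁻¹ := by
        refine sum_le_sum fun k hk => ?_
        obtain ⟨hkn, hk⟩ := mem_erase.mp hk
        have hkK := (mem_filter.mp hk).2
        calc _ ≤ _ := h.norm_sub_le hα hL hkK hn hkn (hE k hkK hkn)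
          _ = _ := by ring
    _ = 8 * α ^ 3 * L * ‖E - lam n‖ * ∑ k ∈ (s.filter (· ≤ K)).erase n, (((k : ℝ) - n) ^ 2)⁻¹ :=
        (mul_sum _ _ _).symm
    _ ≤ 8 * α ^ 3 * L * ‖E - lam n‖ * 4 := by
        gcongr
        exact sum_erase_inv_sq_sub_le_four _ n
    _ = 32 * α ^ 3 * L * ‖E - lam n‖ := by ring

end NearBoundaryData

lemma FarData.nonneg {α ε E₀ : ℝ} {L K N : ℕ} {lam a : ℕ → ℝ} (h : FarData α ε K N E₀ lam a)
    (hnear : NearBoundaryData α L K E₀ lam a) {k : ℕ} (hk : k ≤ N) : 0 ≤ a k := by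
  rcases le_or_gt k K with hkK | hkK
  · exact hnear.2.2.2.1 k hkK
  · exact h.2.2.1 k hkK hk

lemma sum_norm_le_of_far {ε μ : ℝ} {E : ℂ} {lam a : ℕ → ℝ} {s t : Finset ℕ} (hε : 0 < ε)
    (hts : t ⊆ s) (ha : ∀ k ∈ s, 0 ≤ a k) (hsum : ∑ k ∈ s, a k ≤ 1)
    (hfar : ∀ k ∈ t, ε ^ 2 / 2 ≤ |lam k - E.re| ∧ ε ^ 2 / 2 ≤ |lam k - μ|) :
    ∑ k ∈ t, ‖(a k : ℂ) / (lam k - E) - a k / (lam k - μ)‖ ≤ 4 / ε ^ 4 * ‖E - μ‖ := by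
  calc _ ≤ ∑ k ∈ t, 4 / ε ^ 4 * ‖E - μ‖ * a k := by
        refine sum_le_sum fun k hk => ?_
        calc _ ≤ _ := norm_ofReal_div_sub_div_le (ha k (hts hk)) (by positivity) (by positivity)
              (hfar k hk).1 (hfar k hk).2
          _ = _ := by field_simp; ring
    _ = 4 / ε ^ 4 * ‖E - μ‖ * ∑ k ∈ t, a k := (mul_sum _ _ _).symm
    _ ≤ 4 / ε ^ 4 * ‖E - μ‖ * 1 := by
        gcongr
        exact (sum_le_sum_of_subset_of_nonneg hts fun k hk _ => ha k hk).trans hsum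
    _ = 4 / ε ^ 4 * ‖E - μ‖ := mul_one _

theorem stmt8_general (α C₀ : ℝ) (hα : 1 ≤ α) :
    ∃ C ε₀ : ℝ, 1 ≤ C ∧ 0 < ε₀ ∧ ε₀ < 1 ∧
    ∀ ε : ℝ, 0 < ε → ε < ε₀ →
    ∃ L₀ : ℕ, ∀ (L K N : ℕ) (E₀ : ℝ) (lam a : ℕ → ℝ),
      L₀ ≤ L → (K : ℝ) ≤ ε * L → K ≤ N →
      NearBoundaryData α L K E₀ lam a →
      FarData α ε K N E₀ lam a →
      ∀ n : ℕ, n < K →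
      ∀ E : ℂ,
        ((if n = 0 then 2 * (E₀ - ε) - lam 0 else lam (n - 1)) + lam n) / 2 ≤ E.re →
        E.re ≤ (lam n + lam (n + 1)) / 2 →
        -(C₀ * ((n : ℝ) + 1) / (L : ℝ) ^ 2) ≤ E.im → E.im ≤ 0 →
        ‖∑ k ∈ (Finset.range (N + 1)).erase n,
            ((a k : ℂ) / ((lam k : ℂ) - E) - (a k : ℂ) / ((lam k : ℂ) - (lam n : ℂ)))‖ ≤
          C * (L : ℝ) * ‖E - (lam n : ℂ)‖ := by
  refine ⟨32 * α ^ 3 + 1, 1 / 2, by nlinarith [one_le_pow₀ (n := 3) hα], by norm_num,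
    by norm_num, fun ε hε hε₀ => ⟨⌈4 / ε ^ 4⌉₊, ?_⟩⟩
  intro L K N E₀ lam a hL hKL _ hnear hfar n hn E hleft hright _ _
  have hα0 : 0 < α := by linarith
  have hε4 : 4 / ε ^ 4 ≤ L := (Nat.le_ceil _).trans (by exact_mod_cast hL)
  have hεL : 2 ≤ ε * L := two_le_mul_of_four_div_pow_four_le hε (by linarith) hε4
  have hL0 : 0 < L := by exact_mod_cast (show (0 : ℝ) < L by nlinarith)
  have hKL' : (K : ℝ) + 1 ≤ 3 / 2 * (ε * L) := by linarith
  have hlamn : lam n ∈ Set.Icc (E₀ - ε) (E₀ + 9 / 4 * α * ε ^ 2) :=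
    ⟨by linarith [hnear.lt_lam hα0 hL0 hn.le], hnear.lam_le hα0 hL0 hKL' hn.le⟩
  have hre := hnear.re_mem_Icc hα0 hL0 hε.le hKL' hn hleft hright
  have hcell : ∀ k ≤ K, k ≠ n → |lam k - lam n| ≤ 2 * |lam k - E.re| := fun k hk hkn =>
    abs_sub_le_two_mul_abs_sub_of_mem_cell hnear.strictMonoOn hk hn.le hkn
      (fun h0 => by simpa [h0.ne'] using hleft) hright
  have hfar' : ∀ k ∈ ((range (N + 1)).erase n).filter (¬ · ≤ K),
      ε ^ 2 / 2 ≤ |lam k - E.re| ∧ ε ^ 2 / 2 ≤ |lam k - lam n| := by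
    intro k hk
    simp only [mem_filter, mem_erase, mem_range, not_le] at hk
    have far := half_sq_le_abs_sub_of_far hα hε (by linarith) (hfar.1 k hk.2 (by omega))
      (hfar.2.1 k hk.2 (by omega))
    exact ⟨far _ hre, far _ hlamn⟩
  refine (norm_sum_le _ _).trans ?_
  rw [← sum_filter_add_sum_filter_not _ (· ≤ K)]
  calc _ ≤ 32 * α ^ 3 * L * ‖E - lam n‖ + 4 / ε ^ 4 * ‖E - lam n‖ :=
        add_le_add (hnear.sum_norm_le hα0 hL0 hn.le hcell _)
          (sum_norm_le_of_far hε ((filter_subset _ _).trans (erase_subset _ _))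
            (fun k hk => hfar.nonneg hnear (Nat.lt_succ_iff.mp (mem_range.mp hk))) hfar.2.2.2 hfar')
    _ ≤ (32 * α ^ 3 + 1) * L * ‖E - lam n‖ := by
        nlinarith [norm_nonneg (E - lam n)]

/-- Lemma 5.2: on the box `M_n` around `λ_n` (convention `λ_{−1} := 2(E₀−ε) − λ₀`),
the resonance-equation sum with the `n`-th term removed differs from its value at
`λ_n` by at most `C·L·|E − λ_n|`. -/
theorem stmt8 (α C₀ : ℝ) (hα : 1 ≤ α) (hC₀ : 1 ≤ C₀) :
    ∃ C ε₀ : ℝ, 1 ≤ C ∧ 0 < ε₀ ∧ ε₀ < 1 ∧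
    ∀ ε : ℝ, 0 < ε → ε < ε₀ →
    ∃ L₀ : ℕ, ∀ (L K N : ℕ) (E₀ : ℝ) (lam a : ℕ → ℝ),
      L₀ ≤ L → (K : ℝ) ≤ ε * L → K ≤ N →
      NearBoundaryData α L K E₀ lam a →
      FarData α ε K N E₀ lam a →
      ∀ n : ℕ, n < K →
      ∀ E : ℂ,
        ((if n = 0 then 2 * (E₀ - ε) - lam 0 else lam (n - 1)) + lam n) / 2 ≤ E.re →
        E.re ≤ (lam n + lam (n + 1)) / 2 →
        -(C₀ * ((n : ℝ) + 1) / (L : ℝ) ^ 2) ≤ E.im → E.im ≤ 0 →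
        ‖∑ k ∈ (Finset.range (N + 1)).erase n,
            ((a k : ℂ) / ((lam k : ℂ) - E) - (a k : ℂ) / ((lam k : ℂ) - (lam n : ℂ)))‖ ≤
          C * (L : ℝ) * ‖E - (lam n : ℂ)‖ :=
  stmt8_general α C₀ hα
end

section
/- For all α ≥ 1 and κ ∈ (0, 2) there exist ε₀ ∈ (0,1) and for each ε ∈ (0, ε₀) an L₀ = L₀(ε, α, κ), such that the following holds. Let ε ∈ (0, ε₀), L ≥ L₀, let K be an integer with εL/2 ≤ K ≤ εL, N ≥ K, let E₀ ∈ [−2 + κ, 2 − κ], let (λ_k, a_k)_{0 ≤ k ≤ K} be near-boundary spectral data with constant α at E₀ satisfying in addition (iii') (k+1)²/(αL³) ≤ a_k ≤ α(k+1)²/L³ for 0 ≤ k ≤ K, and let (λ_k, a_k)_{K < k ≤ N} be far spectral data. Then there is no z ∈ ℂ with Re z ∈ [E₀ − ε, E₀], Im z ∈ [−ε⁵, 0], z ∉ {λ_0, …, λ_N}, and Σ_{k=0}^{N} a_k/(λ_k − z) + w(z) = 0. -/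
/-!
Only imaginary parts are needed. On the rectangle `Re (4 - z²) ≥ 4 - (Re z)² ≥ κ`, so
`2 Im w(z) ≥ √κ - ε⁵`. By AM-GM each near-boundary term has imaginary part at most
`a_k / (2 (λ_k - Re z)) ≤ α² / (2L)`, hence at most `α² ε` in total because `K + 1 ≤ 2εL`; every
far eigenvalue lies at distance `≥ ε²` from `Re z`, so the far terms contribute at most
`(ε⁵ / ε⁴) Σ a_k ≤ ε`. Once `ε < √κ / (2α² + 3)` the imaginary part of the resonance equation
cannot vanish.
-/

open Finset

/-- `w z = (z + i (4 − z²)^{1/2})/2`, the analytic continuation from the upper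
half-plane of `E ↦ e^{−iθ(E)}` where `E = 2 cos θ(E)`; `(·)^{1/2}` is the principal
branch of the complex square root. -/
noncomputable def w (z : ℂ) : ℂ := (z + Complex.I * (4 - z ^ 2) ^ ((1 : ℂ) / 2)) / 2

lemma abs_im_ofReal_div_ofReal_sub {a : ℝ} (ha : 0 ≤ a) (l : ℝ) (z : ℂ) :
    |((a : ℂ) / ((l : ℂ) - z)).im| = a * |z.im| / ((l - z.re) ^ 2 + z.im ^ 2) := by
  have him : ((a : ℂ) / ((l : ℂ) - z)).im = a * z.im / ((l - z.re) ^ 2 + z.im ^ 2) := by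
    rw [Complex.div_im]
    simp only [Complex.ofReal_im, Complex.sub_re, Complex.ofReal_re, zero_mul,
      Complex.normSq_apply, Complex.sub_im, zero_sub, mul_neg, neg_mul, neg_neg, zero_div]
    ring
  rw [him, abs_div, abs_mul, abs_of_nonneg ha,
    abs_of_nonneg (a := (l - z.re) ^ 2 + z.im ^ 2) (by positivity)]

lemma abs_im_ofReal_div_ofReal_sub_le_of_lt {a l : ℝ} {z : ℂ} (ha : 0 ≤ a) (hz : z.re < l) :
    |((a : ℂ) / ((l : ℂ) - z)).im| ≤ a / (2 * (l - z.re)) := by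
  rw [abs_im_ofReal_div_ofReal_sub ha]
  have hd : 0 < l - z.re := sub_pos.2 hz
  have hamgm : 2 * (l - z.re) * |z.im| ≤ (l - z.re) ^ 2 + z.im ^ 2 := by
    nlinarith [sq_nonneg (l - z.re - |z.im|), sq_abs z.im]
  rw [div_le_div_iff₀ (by positivity) (by positivity)]
  nlinarith [mul_le_mul_of_nonneg_left hamgm ha]

lemma abs_im_ofReal_div_ofReal_sub_le_of_le_abs {a l δ s : ℝ} {z : ℂ} (ha : 0 ≤ a)
    (hδ : 0 < δ) (hl : δ ≤ |l - z.re|) (hs : |z.im| ≤ s) :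
    |((a : ℂ) / ((l : ℂ) - z)).im| ≤ a * s / δ ^ 2 := by
  rw [abs_im_ofReal_div_ofReal_sub ha]
  have hδ2 : δ ^ 2 ≤ (l - z.re) ^ 2 := by
    rw [← sq_abs (l - z.re)]
    gcongr
  exact div_le_div₀ (mul_nonneg ha ((abs_nonneg _).trans hs)) (by gcongr) (by positivity)
    (by nlinarith [sq_nonneg z.im])

lemma sqrt_re_le_re_cpow_half (u : ℂ) : √u.re ≤ (u ^ ((1 : ℂ) / 2)).re := by
  rw [one_div, Complex.cpow_inv_two_re]
  apply Real.sqrt_le_sqrt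
  linarith [Complex.re_le_norm u]

lemma im_w (z : ℂ) : (w z).im = (z.im + ((4 - z ^ 2) ^ ((1 : ℂ) / 2)).re) / 2 := by
  rw [w, Complex.div_im]
  simp only [Complex.add_im, Complex.mul_im, Complex.I_re, zero_mul, Complex.I_im, one_mul,
    zero_add, Complex.re_ofNat, Complex.normSq_ofNat, Complex.add_re, Complex.mul_re, zero_sub,
    Complex.im_ofNat, mul_zero, zero_div, sub_zero]
  ring

lemma sqrt_four_sub_re_sq_le (z : ℂ) : √(4 - z.re ^ 2) ≤ 2 * (w z).im - z.im := by
  have hre : (4 - z ^ 2 : ℂ).re = 4 - z.re ^ 2 + z.im ^ 2 := by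
    simp only [pow_two, Complex.sub_re, Complex.re_ofNat, Complex.mul_re]
    ring
  calc √(4 - z.re ^ 2) ≤ √(4 - z ^ 2 : ℂ).re :=
        Real.sqrt_le_sqrt (by rw [hre]; linarith [sq_nonneg z.im])
    _ ≤ ((4 - z ^ 2) ^ ((1 : ℂ) / 2)).re := sqrt_re_le_re_cpow_half _
    _ = 2 * (w z).im - z.im := by rw [im_w]; ring

namespace NearBoundaryData

variable {α : ℝ} {L K : ℕ} {E₀ : ℝ} {lam a : ℕ → ℝ}

lemma abs_im_div_sub_le (h : NearBoundaryData α L K E₀ lam a) (hα : 0 < α) (hL : 0 < (L : ℝ))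
    {z : ℂ} (hz : z.re ≤ E₀) {k : ℕ} (hk : k ≤ K) :
    |((a k : ℂ) / ((lam k : ℂ) - z)).im| ≤ α ^ 2 / (2 * L) := by
  obtain ⟨-, hlam, -, ha0, ha⟩ := h
  have hgap : ((k : ℝ) + 1) ^ 2 / (α * (L : ℝ) ^ 2) ≤ lam k - z.re := by
    linarith [(hlam k hk).1]
  have hgap0 : 0 < ((k : ℝ) + 1) ^ 2 / (α * (L : ℝ) ^ 2) := by positivity
  calc |((a k : ℂ) / ((lam k : ℂ) - z)).im| ≤ a k / (2 * (lam k - z.re)) :=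
        abs_im_ofReal_div_ofReal_sub_le_of_lt (ha0 k hk) (by linarith)
    _ ≤ α * ((k : ℝ) + 1) ^ 2 / (L : ℝ) ^ 3 / (2 * (((k : ℝ) + 1) ^ 2 / (α * (L : ℝ) ^ 2))) := by
        gcongr
        exact ha k hk
    _ = α ^ 2 / (2 * L) := by field_simp

lemma abs_sum_im_div_sub_le (h : NearBoundaryData α L K E₀ lam a) (hα : 0 < α)
    (hL : 0 < (L : ℝ)) {z : ℂ} (hz : z.re ≤ E₀) :
    |∑ k ∈ range (K + 1), ((a k : ℂ) / ((lam k : ℂ) - z)).im| ≤ (K + 1) * (α ^ 2 / (2 * L)) :=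
  calc |∑ k ∈ range (K + 1), ((a k : ℂ) / ((lam k : ℂ) - z)).im|
      ≤ ∑ k ∈ range (K + 1), |((a k : ℂ) / ((lam k : ℂ) - z)).im| := abs_sum_le_sum_abs _ _
    _ ≤ ∑ _k ∈ range (K + 1), α ^ 2 / (2 * L) :=
        sum_le_sum fun k hk => h.abs_im_div_sub_le hα hL hz (mem_range_succ_iff.1 hk)
    _ = (K + 1) * (α ^ 2 / (2 * L)) := by simp

end NearBoundaryData

namespace FarData

variable {α ε : ℝ} {K N : ℕ} {E₀ : ℝ} {lam a : ℕ → ℝ}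

lemma sq_le_abs_sub_re (h : FarData α ε K N E₀ lam a) (hα : 1 ≤ 3 * α) (hε : 0 < ε)
    (hε1 : ε ≤ 1) {z : ℂ} (hz₁ : E₀ - ε ≤ z.re) (hz₂ : z.re ≤ E₀) {k : ℕ} (hKk : K < k)
    (hkN : k ≤ N) : ε ^ 2 ≤ |lam k - z.re| := by
  have hεε : ε ^ 2 ≤ ε := by nlinarith
  by_cases hleft : E₀ - 2 * ε ≤ lam k
  · have hright : E₀ < lam k := by
      by_contra! hle
      exact h.2.1 k hKk hkN ⟨hleft, hle⟩
    have hdist := h.1 k hKk hkN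
    rw [abs_of_pos (sub_pos.2 hright)] at hdist
    rw [abs_of_pos (by linarith)]
    nlinarith [sq_nonneg ε]
  · rw [abs_sub_comm, abs_of_pos (by linarith)]
    linarith

lemma abs_im_div_sub_le (h : FarData α ε K N E₀ lam a) (hα : 1 ≤ 3 * α) (hε : 0 < ε)
    (hε1 : ε ≤ 1) {z : ℂ} (hz₁ : E₀ - ε ≤ z.re) (hz₂ : z.re ≤ E₀) (hzim : |z.im| ≤ ε ^ 5)
    {k : ℕ} (hKk : K < k) (hkN : k ≤ N) :
    |((a k : ℂ) / ((lam k : ℂ) - z)).im| ≤ a k * ε :=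
  calc |((a k : ℂ) / ((lam k : ℂ) - z)).im| ≤ a k * ε ^ 5 / (ε ^ 2) ^ 2 :=
        abs_im_ofReal_div_ofReal_sub_le_of_le_abs (h.2.2.1 k hKk hkN) (by positivity)
          (h.sq_le_abs_sub_re hα hε hε1 hz₁ hz₂ hKk hkN) hzim
    _ = a k * ε := by field_simp

end FarData

lemma abs_im_sum_div_sub_le {α ε : ℝ} {L K N : ℕ} {E₀ : ℝ} {lam a : ℕ → ℝ} {z : ℂ}
    (hα : 1 ≤ α) (hnear : NearBoundaryData α L K E₀ lam a) (hfar : FarData α ε K N E₀ lam a)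
    (hε : 0 < ε) (hε1 : ε ≤ 1) (hεL : 1 ≤ ε * L) (hK : (K : ℝ) ≤ ε * L) (hKN : K ≤ N)
    (hz₁ : E₀ - ε ≤ z.re) (hz₂ : z.re ≤ E₀) (hzim : |z.im| ≤ ε ^ 5) :
    |(∑ k ∈ range (N + 1), (a k : ℂ) / ((lam k : ℂ) - z)).im| ≤ (α ^ 2 + 1) * ε := by
  have hL : 0 < (L : ℝ) := by nlinarith
  have hnearsum : |∑ k ∈ range (K + 1), ((a k : ℂ) / ((lam k : ℂ) - z)).im| ≤ α ^ 2 * ε := by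
    refine (hnear.abs_sum_im_div_sub_le (by linarith) hL hz₂).trans ?_
    rw [mul_div_assoc', div_le_iff₀ (by positivity)]
    nlinarith [mul_le_mul_of_nonneg_left (by linarith : (K : ℝ) + 1 ≤ 2 * (ε * L)) (sq_nonneg α)]
  have hfarmass : ∑ k ∈ Ico (K + 1) (N + 1), a k ≤ 1 := by
    have hnearmass : 0 ≤ ∑ k ∈ range (K + 1), a k :=
      sum_nonneg fun k hk => hnear.2.2.2.1 k (mem_range_succ_iff.1 hk)
    linarith [sum_range_add_sum_Ico a (by omega : K + 1 ≤ N + 1), hfar.2.2.2]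
  have hfarsum : |∑ k ∈ Ico (K + 1) (N + 1), ((a k : ℂ) / ((lam k : ℂ) - z)).im| ≤ ε :=
    calc |∑ k ∈ Ico (K + 1) (N + 1), ((a k : ℂ) / ((lam k : ℂ) - z)).im|
        ≤ ∑ k ∈ Ico (K + 1) (N + 1), |((a k : ℂ) / ((lam k : ℂ) - z)).im| :=
          abs_sum_le_sum_abs _ _
      _ ≤ ∑ k ∈ Ico (K + 1) (N + 1), a k * ε := sum_le_sum fun k hk =>
          hfar.abs_im_div_sub_le (by linarith) hε hε1 hz₁ hz₂ hzim (mem_Ico.1 hk).1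
            (by have := (mem_Ico.1 hk).2; omega)
      _ = (∑ k ∈ Ico (K + 1) (N + 1), a k) * ε := (sum_mul _ _ _).symm
      _ ≤ ε := mul_le_of_le_one_left hε.le hfarmass
  rw [Complex.im_sum, ← sum_range_add_sum_Ico _ (by omega : K + 1 ≤ N + 1)]
  linarith [abs_add_le (∑ k ∈ range (K + 1), ((a k : ℂ) / ((lam k : ℂ) - z)).im)
    (∑ k ∈ Ico (K + 1) (N + 1), ((a k : ℂ) / ((lam k : ℂ) - z)).im)]

/-- Theorem 1.2: a resonance-free rectangle `[E₀ − ε, E₀] × [−ε⁵, 0]` just outside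
the band edge `E₀`. -/
theorem stmt13 (α κ : ℝ) (hα : 1 ≤ α) (hκ0 : 0 < κ) (hκ2 : κ < 2) :
    ∃ ε₀ : ℝ, 0 < ε₀ ∧ ε₀ < 1 ∧
    ∀ ε : ℝ, 0 < ε → ε < ε₀ →
    ∃ L₀ : ℕ, ∀ (L K N : ℕ) (E₀ : ℝ) (lam a : ℕ → ℝ),
      L₀ ≤ L → ε * L / 2 ≤ (K : ℝ) → (K : ℝ) ≤ ε * L → K ≤ N →
      E₀ ∈ Set.Icc (-2 + κ) (2 - κ) →
      NearBoundaryData α L K E₀ lam a →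
      (∀ k ≤ K, ((k : ℝ) + 1) ^ 2 / (α * (L : ℝ) ^ 3) ≤ a k) →
      FarData α ε K N E₀ lam a →
      ¬ ∃ z : ℂ,
        (E₀ - ε ≤ z.re ∧ z.re ≤ E₀ ∧ -(ε ^ 5) ≤ z.im ∧ z.im ≤ 0) ∧
        (∀ k ≤ N, z ≠ (lam k : ℂ)) ∧
        (∑ k ∈ Finset.range (N + 1), (a k : ℂ) / ((lam k : ℂ) - z)) + w z = 0 := by
  have hC : 0 < 2 * α ^ 2 + 3 := by positivity
  refine ⟨min (1 / 2) (min (κ / 2) (√κ / (2 * α ^ 2 + 3))), by positivity,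
    (min_le_left _ _).trans_lt (by norm_num), fun ε hε hεε₀ => ?_⟩
  obtain ⟨hε1, hεκ, hεC⟩ : ε < 1 / 2 ∧ ε < κ / 2 ∧ ε < √κ / (2 * α ^ 2 + 3) := by
    simpa only [lt_min_iff] using hεε₀
  refine ⟨⌈1 / ε⌉₊, fun L K N E₀ lam a hL _ hK hKN hE₀ hnear _ hfar => ?_⟩
  rintro ⟨z, ⟨hz₁, hz₂, him₁, him₂⟩, -, hres⟩
  have hεL : 1 ≤ ε * L := by
    have := (Nat.le_ceil (1 / ε)).trans (Nat.cast_le.2 hL)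
    rwa [div_le_iff₀ hε, mul_comm] at this
  have hε5 : ε ^ 5 ≤ ε := pow_le_of_le_one hε.le (by linarith) (by norm_num)
  have hzim : |z.im| ≤ ε ^ 5 := abs_le.2 ⟨him₁, him₂.trans (by positivity)⟩
  have hsum := abs_le.1 (abs_im_sum_div_sub_le hα hnear hfar hε (by linarith) hεL hK hKN hz₁
    hz₂ hzim)
  have hκre : κ ≤ 4 - z.re ^ 2 := by
    obtain ⟨hE₀₁, hE₀₂⟩ := hE₀
    nlinarith [mul_nonneg (by linarith : 0 ≤ 2 - κ / 2 - z.re) (by linarith : 0 ≤ 2 - κ / 2 + z.re)]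
  have hw := (Real.sqrt_le_sqrt hκre).trans (sqrt_four_sub_re_sq_le z)
  have him := congrArg Complex.im hres
  rw [Complex.add_im, Complex.zero_im] at him
  have := (lt_div_iff₀ hC).1 hεC
  linarith
end

section
/- For every α ≥ 1 there exist constants C₀ ≥ 1, C ≥ 1 and ε₀ ∈ (0,1), depending only on α, such that the following holds. Let ε ∈ (0, ε₀), L ≥ 1, K ≤ εL, let E₀ ∈ ℝ, and let λ_0 < λ_1 < ⋯ < λ_K and a_0, …, a_K ≥ 0 satisfy (k+1)²/(αL²) ≤ λ_k − E₀ ≤ α(k+1)²/L² and a_k ≤ α(k+1)²/L³ for all 0 ≤ k ≤ K. Then for every x ∈ [E₀ − ε, E₀] and every y with C₀/L² ≤ y ≤ ε⁵ one has Σ_{k=0}^{K} a_k·y/((λ_k − x)² + y²) ≤ C·ε. -/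
open Finset

/-!
Each term is controlled by the Poisson-kernel bound `y / (d² + y²) ≤ 1 / (2d)` with
`d = λ_k - x ≥ (k+1)² / (α L²)`, which turns the growth `a_k ≤ α (k+1)² / L³` of the weights
into the uniform bound `α² / (2L)` per term. There are `K + 1 ≤ 2εL` terms, since
`1 / L² ≤ y ≤ ε⁵` forces `εL ≥ 1`.
-/

lemma mul_div_sq_add_sq_le_div_s14 {a d y A : ℝ} (ha : 0 ≤ a) (hA : 0 < A) (hAd : A ≤ d)
    (hy : 0 < y) : a * y / (d ^ 2 + y ^ 2) ≤ a / (2 * A) := by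
  have hden : 2 * A * y ≤ d ^ 2 + y ^ 2 := by
    nlinarith [sq_nonneg (A - y), sq_nonneg (d - A)]
  calc a * y / (d ^ 2 + y ^ 2) ≤ a * y / (2 * A * y) := by gcongr
    _ = a / (2 * A) := by field_simp

lemma div_two_mul_div_le {a c α L : ℝ} (hc : 0 < c) (hα : 0 < α) (hL : 0 < L)
    (ha : a ≤ α * c / L ^ 3) : a / (2 * (c / (α * L ^ 2))) ≤ α ^ 2 / (2 * L) := by
  calc a / (2 * (c / (α * L ^ 2))) ≤ α * c / L ^ 3 / (2 * (c / (α * L ^ 2))) := by gcongr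
    _ = α ^ 2 / (2 * L) := by field_simp

lemma one_le_mul_of_one_div_sq_le_pow_five {ε L : ℝ} (hε : 0 < ε) (hε1 : ε ≤ 1) (hL : 0 < L)
    (h : 1 / L ^ 2 ≤ ε ^ 5) : 1 ≤ ε * L := by
  have hsq : 1 ≤ (ε * L) ^ 2 := by
    rw [div_le_iff₀ (by positivity)] at h
    have : ε ^ 5 ≤ ε ^ 2 := pow_le_pow_of_le_one hε.le hε1 (by norm_num)
    nlinarith [sq_nonneg L]
  exact (one_le_sq_iff₀ (by positivity)).mp hsq

/-- Estimate (7.73) in the proof of Theorem 1.2: for `x ∈ [E₀ − ε, E₀]` and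
`C₀/L² ≤ y ≤ ε⁵`, the imaginary part of the near-band-edge sum,
`Σ_k a_k y/((λ_k − x)² + y²)`, is at most `C ε`. -/
theorem stmt14 (α : ℝ) (hα : 1 ≤ α) :
    ∃ C₀ C ε₀ : ℝ, 1 ≤ C₀ ∧ 1 ≤ C ∧ 0 < ε₀ ∧ ε₀ < 1 ∧
    ∀ (ε : ℝ) (L K : ℕ) (E₀ : ℝ) (lam a : ℕ → ℝ),
      0 < ε → ε < ε₀ → 1 ≤ L → (K : ℝ) ≤ ε * L →
      (∀ k m : ℕ, k < m → m ≤ K → lam k < lam m) →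
      (∀ k ≤ K, ((k : ℝ) + 1) ^ 2 / (α * (L : ℝ) ^ 2) ≤ lam k - E₀ ∧
        lam k - E₀ ≤ α * ((k : ℝ) + 1) ^ 2 / (L : ℝ) ^ 2) →
      (∀ k ≤ K, 0 ≤ a k) →
      (∀ k ≤ K, a k ≤ α * ((k : ℝ) + 1) ^ 2 / (L : ℝ) ^ 3) →
      ∀ x y : ℝ, E₀ - ε ≤ x → x ≤ E₀ →
        C₀ / (L : ℝ) ^ 2 ≤ y → y ≤ ε ^ 5 →
        ∑ k ∈ Finset.range (K + 1), a k * y / ((lam k - x) ^ 2 + y ^ 2) ≤ C * ε := by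
  refine ⟨1, α ^ 2, 1 / 2, le_rfl, one_le_pow₀ hα, by norm_num, by norm_num, ?_⟩
  intro ε L K E₀ lam a hε hε₀ hL hK _ hlam ha₀ ha x y _ hxE hy₁ hy₂
  have hα₀ : 0 < α := by linarith
  have hL₀ : (0 : ℝ) < L := by exact_mod_cast hL
  have hy : 0 < y := lt_of_lt_of_le (by positivity) hy₁
  have hεL : 1 ≤ ε * L :=
    one_le_mul_of_one_div_sq_le_pow_five hε (by linarith) hL₀ (hy₁.trans hy₂)
  have hterm : ∀ k ∈ range (K + 1),
      a k * y / ((lam k - x) ^ 2 + y ^ 2) ≤ α ^ 2 / (2 * L) := by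
    intro k hk
    have hkK : k ≤ K := Nat.lt_succ_iff.mp (mem_range.mp hk)
    exact (mul_div_sq_add_sq_le_div_s14 (ha₀ k hkK) (by positivity)
      ((hlam k hkK).1.trans (by linarith)) hy).trans
      (div_two_mul_div_le (by positivity) hα₀ hL₀ (ha k hkK))
  calc ∑ k ∈ range (K + 1), a k * y / ((lam k - x) ^ 2 + y ^ 2)
      ≤ ((K : ℝ) + 1) * (α ^ 2 / (2 * L)) := by
        simpa using sum_le_card_nsmul _ _ _ hterm
    _ ≤ 2 * (ε * L) * (α ^ 2 / (2 * L)) := by gcongr; linarith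
    _ = α ^ 2 * ε := by field_simp
end

section
/- Let θ₁ > 0 and M ≥ 1, let 0 < r ≤ θ₁/(10M), let g : [0, r] → ℝ be continuously differentiable with |g(t)| ≤ M and |g'(t)| ≤ M for all t ∈ [0, r], let c₀ ∈ [−π/2, 0], and define φ(t) := θ₁·t + t²·g(t). Then there exist ε₀ ∈ (0,1), α ≥ 1 and L₀ ≥ 1, depending only on θ₁, M and r, with the following property: for all ε ∈ (0, ε₀) and all integers L ≥ L₀, if t_k ∈ [0, r] satisfy φ(t_k) = ((k+1)π + c₀)/L for every integer k with 0 ≤ k ≤ εL, then, setting x_k := t_k², one has (k+1)²/(αL²) ≤ x_k ≤ α(k+1)²/L² for all 0 ≤ k ≤ εL, and (k² − m²)/(αL²) ≤ x_k − x_m ≤ α(k² − m²)/L² for all 0 ≤ m < k ≤ εL. -/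
/-!
Near the band edge, `φ(t) = θ₁ t + t² g(t)` is a small perturbation of `t ↦ θ₁ t`: as long as
`t ≤ 1`, the derivative `2 t g + t² g'` of the perturbation is at most `θ₁ / 2` in absolute value,
so `φ` is bi-Lipschitz with constants `θ₁ / 2` and `3 θ₁ / 2`. The quantization condition then pins
`t_k` to `(k + 1) / L` and `t_k - t_m` to `(k - m) / L` up to factors depending only on `θ₁`, and
multiplying `t_k - t_m ≍ (k - m) / L` by `t_k + t_m ≍ (k + m) / L` gives
`x_k - x_m ≍ (k² - m²) / L²`. Taking `ε₀` and `1 / L₀` small keeps all `t_k` below `1`.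
-/

open Set Real

def Comparable (C x y : ℝ) : Prop := x ≤ C * y ∧ y ≤ C * x

namespace Comparable

variable {C D x y x' y' z : ℝ}

theorem nonneg (h : Comparable C x y) (hC : 0 < C) (hy : 0 ≤ y) : 0 ≤ x :=
  nonneg_of_mul_nonneg_right (hy.trans h.2) hC

theorem mono (h : Comparable C x y) (hCD : C ≤ D) (hx : 0 ≤ x) (hy : 0 ≤ y) :
    Comparable D x y :=
  ⟨h.1.trans (mul_le_mul_of_nonneg_right hCD hy), h.2.trans (mul_le_mul_of_nonneg_right hCD hx)⟩

theorem add (h : Comparable C x y) (h' : Comparable C x' y') : Comparable C (x + x') (y + y') :=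
  ⟨by linarith [h.1, h'.1], by linarith [h.2, h'.2]⟩

theorem trans (h : Comparable C x y) (h' : Comparable D y z) (hC : 0 ≤ C) (hD : 0 ≤ D) :
    Comparable (C * D) x z :=
  ⟨h.1.trans ((mul_le_mul_of_nonneg_left h'.1 hC).trans_eq (mul_assoc C D z).symm),
    h'.2.trans ((mul_le_mul_of_nonneg_left h.2 hD).trans_eq (by ring))⟩

theorem mul {C' : ℝ} (h : Comparable C x y) (h' : Comparable C' x' y') (hx : 0 ≤ x) (hy : 0 ≤ y)
    (hx' : 0 ≤ x') (hy' : 0 ≤ y') : Comparable (C * C') (x * x') (y * y') := by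
  constructor
  · calc x * x' ≤ (C * y) * (C' * y') := mul_le_mul h.1 h'.1 hx' (hx.trans h.1)
      _ = C * C' * (y * y') := by ring
  · calc y * y' ≤ (C * x) * (C' * x') := mul_le_mul h.2 h'.2 hy' (hy.trans h.2)
      _ = C * C' * (x * x') := by ring

theorem sq (h : Comparable C x y) (hC : 0 < C) (hy : 0 ≤ y) :
    Comparable (C * C) (x ^ 2) (y ^ 2) := by
  have hx := h.nonneg hC hy
  simpa only [pow_two] using h.mul h hx hy hx hy

theorem div_le_and_le_mul_div (h : Comparable C x (y / z)) (hC : 0 < C) :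
    y / (C * z) ≤ x ∧ x ≤ C * y / z := by
  refine ⟨?_, by simpa only [mul_div_assoc] using h.1⟩
  rw [mul_comm, ← div_div, div_le_iff₀ hC, mul_comm]
  exact h.2

end Comparable

theorem comparable_add_one_div_add_add_one_div {a b L : ℝ} (hab : 1 ≤ a + b) (hL : 0 ≤ L) :
    Comparable 3 ((a + 1) / L + (b + 1) / L) ((a + b) / L) := by
  rw [← add_div]
  constructor <;> rw [← mul_div_assoc] <;> exact div_le_div_of_nonneg_right (by linarith) hL

theorem comparable_of_bounds {θ u v w : ℝ} (hθ : 0 < θ) (hv : 0 ≤ v)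
    (h₁ : θ / 2 * u ≤ w) (h₂ : w ≤ 3 * θ / 2 * u) (h₃ : π / 2 * v ≤ w) (h₄ : w ≤ π * v) :
    Comparable (7 * (θ + θ⁻¹)) u v := by
  -- the constant `7` beats `2π`, and `3 / π < 1`
  have hπ := pi_gt_three
  have hπ' := pi_lt_d2
  have hu : 0 ≤ u := by nlinarith
  have hθinv : θ * θ⁻¹ = 1 := mul_inv_cancel₀ hθ.ne'
  constructor
  · have : θ * u ≤ θ * (7 * θ⁻¹ * v) := by nlinarith
    nlinarith [le_of_mul_le_mul_left this hθ, mul_nonneg hθ.le hv]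
  · nlinarith [mul_nonneg (inv_nonneg.2 hθ.le) hu]

def phase (θ : ℝ) (g : ℝ → ℝ) (s : ℝ) : ℝ := θ * s + s ^ 2 * g s

section Phase

variable {θ : ℝ} {g g' : ℝ → ℝ} {s : Set ℝ}

theorem abs_two_mul_mul_add_sq_mul_le {M x u v : ℝ} (hx : x ∈ Icc (0 : ℝ) 1)
    (hxM : x * M ≤ θ / 10) (hu : |u| ≤ M) (hv : |v| ≤ M) :
    |2 * x * u + x ^ 2 * v| ≤ θ / 2 := by
  have hM : 0 ≤ M := (abs_nonneg u).trans hu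
  have hxu : x * |u| ≤ x * M := mul_le_mul_of_nonneg_left hu hx.1
  have hxv : x * |v| ≤ x * M := mul_le_mul_of_nonneg_left hv hx.1
  calc |2 * x * u + x ^ 2 * v| ≤ |2 * x * u| + |x ^ 2 * v| := abs_add_le _ _
    _ = 2 * (x * |u|) + x * (x * |v|) := by
        rw [abs_mul, abs_mul, abs_mul, abs_two, abs_of_nonneg hx.1, abs_of_nonneg (sq_nonneg x)]
        ring
    _ ≤ θ / 2 := by
        nlinarith [mul_le_mul_of_nonneg_left hxv hx.1,
          mul_le_of_le_one_left (mul_nonneg hx.1 hM) hx.2]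

theorem hasDerivWithinAt_sq_mul {x : ℝ} (hg : HasDerivWithinAt g (g' x) s x) :
    HasDerivWithinAt (fun y => y ^ 2 * g y) (2 * x * g x + x ^ 2 * g' x) s x :=
  ((hasDerivWithinAt_pow 2 x).fun_mul hg).congr_deriv (by norm_num)

theorem phase_sub_mem_Icc (hs : Convex ℝ s) (hg : ∀ x ∈ s, HasDerivWithinAt g (g' x) s x)
    (hsmall : ∀ x ∈ s, |2 * x * g x + x ^ 2 * g' x| ≤ θ / 2) {a b : ℝ} (ha : a ∈ s) (hb : b ∈ s)
    (hab : a ≤ b) :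
    phase θ g b - phase θ g a ∈ Icc (θ / 2 * (b - a)) (3 * θ / 2 * (b - a)) := by
  have hlip := hs.norm_image_sub_le_of_norm_hasDerivWithin_le
    (fun x hx => hasDerivWithinAt_sq_mul (hg x hx)) hsmall ha hb
  simp only [Real.norm_eq_abs, abs_of_nonneg (sub_nonneg.2 hab)] at hlip
  have := abs_le.1 hlip
  unfold phase
  constructor <;> nlinarith [this.1, this.2]

theorem phase_monotoneOn (hθ : 0 ≤ θ) (hs : Convex ℝ s)
    (hg : ∀ x ∈ s, HasDerivWithinAt g (g' x) s x)
    (hsmall : ∀ x ∈ s, |2 * x * g x + x ^ 2 * g' x| ≤ θ / 2) : MonotoneOn (phase θ g) s :=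
  fun _ ha _ hb hab => sub_nonneg.1 <|
    (mul_nonneg (by positivity) (sub_nonneg.2 hab)).trans
      (phase_sub_mem_Icc hs hg hsmall ha hb hab).1

end Phase

theorem quantized_mem_Icc {c₀ L k : ℝ} (hc₀ : c₀ ∈ Icc (-(π / 2)) 0) (hL : 0 < L) (hk : 0 ≤ k) :
    ((k + 1) * π + c₀) / L ∈ Icc (π / 2 * ((k + 1) / L)) (π * ((k + 1) / L)) := by
  rw [← mul_div_assoc, ← mul_div_assoc]
  constructor <;> apply div_le_div_of_nonneg_right _ hL.le <;> nlinarith [hc₀.1, hc₀.2, pi_pos]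

section Quantized

variable {θ ρ c₀ L : ℝ} {g g' : ℝ → ℝ}

theorem comparable_of_phase_eq (hθ : 0 < θ)
    (hg : ∀ x ∈ Icc 0 ρ, HasDerivWithinAt g (g' x) (Icc 0 ρ) x)
    (hsmall : ∀ x ∈ Icc 0 ρ, |2 * x * g x + x ^ 2 * g' x| ≤ θ / 2)
    (hc₀ : c₀ ∈ Icc (-(π / 2)) 0) (hL : 0 < L) {k b : ℝ} (hk : 0 ≤ k) (hb : b ∈ Icc 0 ρ)
    (hφ : phase θ g b = ((k + 1) * π + c₀) / L) :
    Comparable (7 * (θ + θ⁻¹)) b ((k + 1) / L) := by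
  have h := phase_sub_mem_Icc (convex_Icc 0 ρ) hg hsmall (left_mem_Icc.2 (hb.1.trans hb.2)) hb hb.1
  simp only [phase, sub_zero, zero_pow two_ne_zero, zero_mul, mul_zero, add_zero] at h
  obtain ⟨hlo, hhi⟩ := quantized_mem_Icc hc₀ hL hk
  rw [← phase, hφ] at h
  exact comparable_of_bounds hθ (by positivity) h.1 h.2 hlo hhi

theorem comparable_sub_of_phase_eq (hθ : 0 < θ)
    (hg : ∀ x ∈ Icc 0 ρ, HasDerivWithinAt g (g' x) (Icc 0 ρ) x)
    (hsmall : ∀ x ∈ Icc 0 ρ, |2 * x * g x + x ^ 2 * g' x| ≤ θ / 2)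
    (hL : 0 < L) {k m a b : ℝ} (hmk : m < k) (ha : a ∈ Icc 0 ρ) (hb : b ∈ Icc 0 ρ)
    (hφa : phase θ g a = ((m + 1) * π + c₀) / L) (hφb : phase θ g b = ((k + 1) * π + c₀) / L) :
    Comparable (7 * (θ + θ⁻¹)) (b - a) ((k - m) / L) := by
  have hdiff : phase θ g b - phase θ g a = π * ((k - m) / L) := by
    rw [hφa, hφb]; field_simp; ring
  have hv : 0 ≤ (k - m) / L := div_nonneg (sub_nonneg.2 hmk.le) hL.le
  have hab : a ≤ b := ((phase_monotoneOn hθ.le (convex_Icc 0 ρ) hg hsmall).reflect_lt ha hb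
    (by nlinarith [pi_pos, div_pos (sub_pos.2 hmk) hL])).le
  have h := phase_sub_mem_Icc (convex_Icc 0 ρ) hg hsmall ha hb hab
  rw [hdiff] at h
  exact comparable_of_bounds hθ hv h.1 h.2 (by nlinarith [pi_pos]) le_rfl

end Quantized

theorem add_one_div_le {c ε L k : ℝ} (hc : 0 < c) (hε : ε ≤ c / 2) (hL : 2 / c ≤ L)
    (hk : k ≤ ε * L) : (k + 1) / L ≤ c := by
  have hL0 : 0 < L := (div_pos two_pos hc).trans_le hL
  have hcL : 2 ≤ c * L := by rwa [div_le_iff₀ hc, mul_comm] at hL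
  rw [div_le_iff₀ hL0]
  nlinarith

theorem le_one_of_phase_eq {θ c₀ L k x : ℝ} {g : ℝ → ℝ} (hθ : 0 < θ) (hx : 0 ≤ x)
    (hxg : x * |g x| ≤ θ / 2) (hc₀ : c₀ ∈ Icc (-(π / 2)) 0) (hL : 0 < L) (hk : 0 ≤ k)
    (hkL : (k + 1) / L ≤ θ / (2 * π)) (hφ : phase θ g x = ((k + 1) * π + c₀) / L) : x ≤ 1 := by
  have hφθ : phase θ g x ≤ θ / 2 := calc
    phase θ g x ≤ π * ((k + 1) / L) := hφ.trans_le (quantized_mem_Icc hc₀ hL hk).2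
    _ ≤ π * (θ / (2 * π)) := by gcongr
    _ = θ / 2 := by field_simp
  have : -(θ / 2) ≤ x * g x := (neg_le_neg hxg).trans (by nlinarith [neg_abs_le (g x)])
  unfold phase at hφθ
  nlinarith [mul_le_mul_of_nonneg_left this hx]

theorem comparable_sq_sub_sq {C L k m a b : ℝ} (hC : 0 < C) (hL : 0 < L) (hm : 0 ≤ m)
    (hmk : m + 1 ≤ k) (hsub : Comparable C (b - a) ((k - m) / L))
    (hb : Comparable C b ((k + 1) / L)) (ha : Comparable C a ((m + 1) / L)) :
    Comparable (C * (C * 3)) (b ^ 2 - a ^ 2) ((k ^ 2 - m ^ 2) / L ^ 2) := by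
  have hv : 0 ≤ (k - m) / L := div_nonneg (by linarith) hL.le
  have hsum := (hb.add ha).trans (comparable_add_one_div_add_add_one_div (by linarith) hL.le)
    hC.le (by norm_num)
  have hab : 0 ≤ b + a := add_nonneg (hb.nonneg hC (div_nonneg (by linarith) hL.le))
    (ha.nonneg hC (div_nonneg (by linarith) hL.le))
  have h := hsub.mul hsum (hsub.nonneg hC hv) hv hab (div_nonneg (by linarith) hL.le)
  rwa [show (b - a) * (b + a) = b ^ 2 - a ^ 2 by ring,
    show (k - m) / L * ((k + m) / L) = (k ^ 2 - m ^ 2) / L ^ 2 by field_simp; ring] at h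

theorem stmt15_general (θ₁ M r : ℝ) (hθ₁ : 0 < θ₁) (hM : 1 ≤ M)
    (hr : r ≤ θ₁ / (10 * M)) :
    ∃ ε₀ α : ℝ, ∃ L₀ : ℕ, 0 < ε₀ ∧ ε₀ < 1 ∧ 1 ≤ α ∧ 1 ≤ L₀ ∧
    ∀ g g' : ℝ → ℝ,
      (∀ t ∈ Set.Icc (0 : ℝ) r, HasDerivWithinAt g (g' t) (Set.Icc (0 : ℝ) r) t) →
      ContinuousOn g' (Set.Icc (0 : ℝ) r) →
      (∀ t ∈ Set.Icc (0 : ℝ) r, |g t| ≤ M) →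
      (∀ t ∈ Set.Icc (0 : ℝ) r, |g' t| ≤ M) →
    ∀ c₀ : ℝ, c₀ ∈ Set.Icc (-(Real.pi / 2)) 0 →
    ∀ ε : ℝ, 0 < ε → ε < ε₀ →
    ∀ L : ℕ, L₀ ≤ L →
    ∀ t : ℕ → ℝ,
      (∀ k : ℕ, (k : ℝ) ≤ ε * L →
        t k ∈ Set.Icc (0 : ℝ) r ∧
        θ₁ * t k + (t k) ^ 2 * g (t k) = (((k : ℝ) + 1) * Real.pi + c₀) / (L : ℝ)) →
      (∀ k : ℕ, (k : ℝ) ≤ ε * L →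
        ((k : ℝ) + 1) ^ 2 / (α * (L : ℝ) ^ 2) ≤ (t k) ^ 2 ∧
        (t k) ^ 2 ≤ α * ((k : ℝ) + 1) ^ 2 / (L : ℝ) ^ 2) ∧
      (∀ k m : ℕ, m < k → (k : ℝ) ≤ ε * L →
        ((k : ℝ) ^ 2 - (m : ℝ) ^ 2) / (α * (L : ℝ) ^ 2) ≤ (t k) ^ 2 - (t m) ^ 2 ∧
        (t k) ^ 2 - (t m) ^ 2 ≤ α * ((k : ℝ) ^ 2 - (m : ℝ) ^ 2) / (L : ℝ) ^ 2) := by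
  have hM0 : 0 < M := one_pos.trans_le hM
  have hxM : ∀ x ∈ Icc 0 r, x * M ≤ θ₁ / 10 := fun x hx =>
    (mul_le_mul_of_nonneg_right hx.2 hM0.le).trans <| by
      rw [le_div_iff₀ (by positivity)] at hr; linarith
  set c := θ₁ / (2 * π)
  set C := 7 * (θ₁ + θ₁⁻¹)
  have hC : 1 ≤ C := by nlinarith [inv_pos.2 hθ₁, mul_inv_cancel₀ hθ₁.ne', sq_nonneg (θ₁ - 1)]
  refine ⟨min (1 / 2) (c / 2), C * (C * 3), ⌈2 / c⌉₊, by positivity,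
    (min_le_left _ _).trans_lt (by norm_num), by nlinarith, Nat.ceil_pos.2 (by positivity), ?_⟩
  intro g g' hg _ hgM hg'M c₀ hc₀ ε _ hε L hL t ht
  have hcL : 2 / c ≤ L := (Nat.le_ceil _).trans (by exact_mod_cast hL)
  have hL0 : (0 : ℝ) < L := (div_pos two_pos (by positivity)).trans_le hcL
  have hρr : Icc 0 (min r 1) ⊆ Icc 0 r := Icc_subset_Icc_right (min_le_left _ _)
  have hgρ : ∀ x ∈ Icc 0 (min r 1), HasDerivWithinAt g (g' x) (Icc 0 (min r 1)) x :=
    fun x hx => (hg x (hρr hx)).mono hρr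
  have hsmall : ∀ x ∈ Icc 0 (min r 1), |2 * x * g x + x ^ 2 * g' x| ≤ θ₁ / 2 := fun x hx =>
    abs_two_mul_mul_add_sq_mul_le ⟨hx.1, hx.2.trans (min_le_right _ _)⟩ (hxM x (hρr hx))
      (hgM x (hρr hx)) (hg'M x (hρr hx))
  have htρ : ∀ k : ℕ, (k : ℝ) ≤ ε * L → t k ∈ Icc 0 (min r 1) := fun k hk => by
    obtain ⟨⟨ht0, htr⟩, hφ⟩ := ht k hk
    refine ⟨ht0, le_min htr (le_one_of_phase_eq hθ₁ ht0 ?_ hc₀ hL0 k.cast_nonneg ?_ hφ)⟩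
    · nlinarith [mul_le_mul_of_nonneg_left (hgM _ ⟨ht0, htr⟩) ht0, hxM _ ⟨ht0, htr⟩]
    · exact add_one_div_le (by positivity) (min_le_right _ _) hcL
        (hk.trans (mul_le_mul_of_nonneg_right hε.le hL0.le))
  have hcomp : ∀ k : ℕ, (k : ℝ) ≤ ε * L → Comparable C (t k) ((k + 1) / L) := fun k hk =>
    comparable_of_phase_eq hθ₁ hgρ hsmall hc₀ hL0 k.cast_nonneg (htρ k hk) (ht k hk).2
  refine ⟨fun k hk => ?_, fun k m hmk hk => ?_⟩
  · have h := (hcomp k hk).sq (by positivity) (by positivity)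
    rw [div_pow] at h
    exact (h.mono (by nlinarith) (by positivity) (by positivity)).div_le_and_le_mul_div
      (by nlinarith)
  · have hm : (m : ℝ) ≤ ε * L := (Nat.cast_le.2 hmk.le).trans hk
    exact (comparable_sq_sub_sq (by positivity) hL0 m.cast_nonneg (by exact_mod_cast hmk)
      (comparable_sub_of_phase_eq hθ₁ hgρ hsmall hL0 (Nat.cast_lt.2 hmk) (htρ m hm)
        (htρ k hk) (ht m hm).2 (ht k hk).2) (hcomp k hk) (hcomp m hm)).div_le_and_le_mul_div
      (by nlinarith)

/-- Lemma 3.4 (reduced form): if the quantization condition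
`φ(t_k) = ((k+1)π + c₀)/L` holds with `φ(t) = θ₁ t + t² g(t)`, `θ₁ > 0`, `g` of
class `C¹` and bounded together with its derivative by `M` on `[0, r]`, then
`x_k := t_k²` satisfies `x_k ≍ (k+1)²/L²` and `x_k − x_m ≍ (k² − m²)/L²`,
with constants `ε₀`, `α`, `L₀` depending only on `θ₁`, `M` and `r`. -/
theorem stmt15 (θ₁ M r : ℝ) (hθ₁ : 0 < θ₁) (hM : 1 ≤ M)
    (hr0 : 0 < r) (hr : r ≤ θ₁ / (10 * M)) :
    ∃ ε₀ α : ℝ, ∃ L₀ : ℕ, 0 < ε₀ ∧ ε₀ < 1 ∧ 1 ≤ α ∧ 1 ≤ L₀ ∧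
    ∀ g g' : ℝ → ℝ,
      (∀ t ∈ Set.Icc (0 : ℝ) r, HasDerivWithinAt g (g' t) (Set.Icc (0 : ℝ) r) t) →
      ContinuousOn g' (Set.Icc (0 : ℝ) r) →
      (∀ t ∈ Set.Icc (0 : ℝ) r, |g t| ≤ M) →
      (∀ t ∈ Set.Icc (0 : ℝ) r, |g' t| ≤ M) →
    ∀ c₀ : ℝ, c₀ ∈ Set.Icc (-(Real.pi / 2)) 0 →
    ∀ ε : ℝ, 0 < ε → ε < ε₀ →
    ∀ L : ℕ, L₀ ≤ L →
    ∀ t : ℕ → ℝ,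
      (∀ k : ℕ, (k : ℝ) ≤ ε * L →
        t k ∈ Set.Icc (0 : ℝ) r ∧
        θ₁ * t k + (t k) ^ 2 * g (t k) = (((k : ℝ) + 1) * Real.pi + c₀) / (L : ℝ)) →
      (∀ k : ℕ, (k : ℝ) ≤ ε * L →
        ((k : ℝ) + 1) ^ 2 / (α * (L : ℝ) ^ 2) ≤ (t k) ^ 2 ∧
        (t k) ^ 2 ≤ α * ((k : ℝ) + 1) ^ 2 / (L : ℝ) ^ 2) ∧
      (∀ k m : ℕ, m < k → (k : ℝ) ≤ ε * L →
        ((k : ℝ) ^ 2 - (m : ℝ) ^ 2) / (α * (L : ℝ) ^ 2) ≤ (t k) ^ 2 - (t m) ^ 2 ∧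
        (t k) ^ 2 - (t m) ^ 2 ≤ α * ((k : ℝ) ^ 2 - (m : ℝ) ^ 2) / (L : ℝ) ^ 2) :=
  stmt15_general θ₁ M r hθ₁ hM hr
end
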